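/- arXiv:math/0012190 — 9 statements merged into one kernel-verified Lean document; each statement's English description precedes it below -/
import Mathlib

section
/- Let 0 ≤ l_1 ≤ k, let J = {v_1 < ⋯ < v_b} ⊆ {1,…,k}, let p be the number of elements of J that are ≤ l_1, and let the complement of J ∩ [l_1+1, k] in the interval [l_1+1, k] be labeled v'_p < v'_{p−1} < ⋯ (with the convention that the labels beyond the size of the complement are set to k+1). Then the componentwise positive part of the vector κ(J) − κ([l_1+1, l_1+b]) equals Σ_{i=1}^p (κ({v_i}) − κ({v'_i})). -/
/-!
Let `g` and `q` count the elements of `[l₁+1, α]` outside and inside `J`, so `g + q = α - l₁`.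
As `v` is increasing, `v i ≤ l₁` iff `i < p`; likewise the `j`-th element of the sorted complement
is `≤ α` iff `j < g`. Hence the right side is `#{i < p | v i ≤ α} - min p g`. For `α ≤ l₁` both
sides are `κ(J)_α`; for `α > l₁` the left side is `(p + q - min b (g + q))⁺` and, since
`p + q ≤ b`, the identity is integer arithmetic.
-/

/-- `κ(I)_α = #{i ∈ I : i ≤ α}`. -/
def kappa (I : Finset ℕ) (α : ℕ) : ℤ := ((I.filter (fun i => i ≤ α)).card : ℤ)

open Finset

theorem StrictMono.le_iff_lt_card_filter_le {β : Type*} [LinearOrder β] {n : ℕ} {f : Fin n → β}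
    (hf : StrictMono f) (i : Fin n) (a : β) : f i ≤ a ↔ (i : ℕ) < #{j | f j ≤ a} := by
  constructor
  · intro h
    have hsub : Iic i ⊆ ({j | f j ≤ a} : Finset (Fin n)) := fun j hj =>
      mem_filter.2 ⟨mem_univ _, (hf.monotone (mem_Iic.1 hj)).trans h⟩
    have := card_le_card hsub
    rw [Fin.card_Iic] at this
    omega
  · intro h
    by_contra! hc
    have hsub : ({j | f j ≤ a} : Finset (Fin n)) ⊆ Iio i := fun j hj =>
      mem_Iio.2 (hf.lt_iff_lt.1 (lt_of_le_of_lt (mem_filter.1 hj).2 hc))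
    have := card_le_card hsub
    rw [Fin.card_Iio] at this
    omega

theorem Finset.card_filter_image_of_injOn {ι β : Type*} [DecidableEq β] {s : Finset ι} {f : ι → β}
    (hf : Set.InjOn f s) (q : β → Prop) [DecidablePred q] :
    #{x ∈ s.image f | q x} = #{i ∈ s | q (f i)} := by
  rw [filter_image, card_image_of_injOn (hf.mono (filter_subset _ s))]

theorem Finset.sort_getD_le_iff {β : Type*} [LinearOrder β] (s : Finset β) {a d : β} (had : a < d)
    (j : ℕ) : (s.sort (· ≤ ·)).getD j d ≤ a ↔ j < #{x ∈ s | x ≤ a} := by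
  by_cases hj : j < #s
  · have hcount : #{i | s.orderEmbOfFin rfl i ≤ a} = #{x ∈ s | x ≤ a} := by
      conv_rhs => rw [← image_orderEmbOfFin_univ s rfl]
      rw [card_filter_image_of_injOn (s.orderEmbOfFin rfl).injective.injOn]
    rw [List.getD_eq_getElem _ _ (by simpa using hj), ← hcount]
    exact (s.orderEmbOfFin rfl).strictMono.le_iff_lt_card_filter_le ⟨j, hj⟩ a
  · rw [List.getD_eq_default _ _ (by simpa using hj)]
    exact iff_of_false (not_le.2 had) (by have := card_filter_le s (· ≤ a); omega)

theorem Fin.card_filter_sub_succ_lt (p g : ℕ) : #{i : Fin p | p - (i + 1) < g} = min p g := by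
  have h : ({i : Fin p | p - (i + 1) < g} : Finset _).map Fin.valEmbedding = Ico (p - g) p := by
    ext x
    simp only [mem_map, mem_filter, mem_univ, true_and, Fin.valEmbedding_apply, mem_Ico]
    constructor
    · rintro ⟨i, hi, rfl⟩
      omega
    · intro hx
      exact ⟨⟨x, hx.2⟩, by simp only; omega, rfl⟩
  rw [← card_map, h, Nat.card_Ico]
  omega

theorem StrictMono.card_filter_castLE_le {β : Type*} [LinearOrder β] {b p : ℕ} {v : Fin b → β}
    (hv : StrictMono v) {l : β} (hp : p = #{i | v i ≤ l}) (hpb : p ≤ b) (a : β) :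
    #{i : Fin p | v (Fin.castLE hpb i) ≤ a} = #{i | v i ≤ l ∧ v i ≤ a} := by
  rw [← card_map (Fin.castLEEmb hpb)]
  congr 1
  ext j
  simp only [mem_map, mem_filter, mem_univ, true_and, Fin.coe_castLEEmb,
    hv.le_iff_lt_card_filter_le j l, ← hp]
  constructor
  · rintro ⟨i, hi, rfl⟩
    exact ⟨i.2, hi⟩
  · rintro ⟨hj, hja⟩
    exact ⟨⟨j, hj⟩, hja, rfl⟩

theorem kappa_Icc_succ_add (l b α : ℕ) : kappa (Icc (l + 1) (l + b)) α = (min b (α - l) : ℕ) := by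
  have h : {x ∈ Icc (l + 1) (l + b) | x ≤ α} = Icc (l + 1) (min (l + b) α) := by
    ext x
    simp only [mem_filter, mem_Icc, le_min_iff]
    omega
  rw [kappa, h, Nat.card_Icc]
  omega

theorem card_filter_Icc_sdiff_add_card_filter (J : Finset ℕ) {l k α : ℕ} (hα : α ≤ k) :
    #{x ∈ Icc (l + 1) k \ J | x ≤ α} + #{x ∈ J | l < x ∧ x ≤ α} = α - l := by
  have hgap : {x ∈ Icc (l + 1) k \ J | x ≤ α} = Icc (l + 1) α \ J := by
    ext x
    simp only [mem_filter, mem_sdiff, mem_Icc]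
    grind
  have hhit : {x ∈ J | l < x ∧ x ≤ α} = Icc (l + 1) α ∩ J := by
    ext x
    simp only [mem_filter, mem_inter, mem_Icc]
    grind
  rw [hgap, hhit, card_sdiff_add_card_inter, Nat.card_Icc]
  omega

theorem kappa_le_card (J : Finset ℕ) (α : ℕ) : kappa J α ≤ #J := by
  rw [kappa]
  exact_mod_cast card_filter_le J _

theorem kappa_eq_card_filter_add_card_filter (J : Finset ℕ) (l α : ℕ) :
    kappa J α = #{x ∈ J | x ≤ l ∧ x ≤ α} + #{x ∈ J | l < x ∧ x ≤ α} := by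
  rw [kappa, ← card_filter_add_card_filter_not (fun x => x ≤ l), filter_filter, filter_filter]
  simp only [not_le, and_comm, Nat.cast_add]

theorem stmt7_general (k l1 b : ℕ) (v : Fin b → ℕ)
    (hv : StrictMono v)
    (p : ℕ) (hp : p = (Finset.univ.filter (fun i : Fin b => v i ≤ l1)).card)
    (hpb : p ≤ b) :
    ∀ α ∈ Finset.Icc 1 k,
      max (kappa (Finset.image v Finset.univ) α - kappa (Finset.Icc (l1 + 1) (l1 + b)) α) 0
        = ∑ i : Fin p,
            ((if v (Fin.castLE hpb i) ≤ α then (1 : ℤ) else 0) -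
              (if ((Finset.Icc (l1 + 1) k \ Finset.image v Finset.univ).sort (· ≤ ·)).getD
                    (p - ((i : ℕ) + 1)) (k + 1) ≤ α then (1 : ℤ) else 0)) := by
  intro α hα
  have hαk : α ≤ k := (mem_Icc.1 hα).2
  set J := univ.image v
  have hcard (q : ℕ → Prop) [DecidablePred q] : #{x ∈ J | q x} = #{i | q (v i)} :=
    card_filter_image_of_injOn hv.injective.injOn q
  have hfirst : ∑ i : Fin p, (if v (Fin.castLE hpb i) ≤ α then (1 : ℤ) else 0)
      = #{x ∈ J | x ≤ l1 ∧ x ≤ α} := by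
    rw [sum_boole, hv.card_filter_castLE_le hp hpb, hcard]
  have hsecond : ∑ i : Fin p, (if ((Icc (l1 + 1) k \ J).sort (· ≤ ·)).getD (p - (i + 1)) (k + 1) ≤ α
      then (1 : ℤ) else 0) = (min p #{x ∈ Icc (l1 + 1) k \ J | x ≤ α} : ℕ) := by
    simp_rw [sort_getD_le_iff _ (Nat.lt_succ_of_le hαk)]
    rw [sum_boole, Fin.card_filter_sub_succ_lt]
  have hlow : l1 < α → #{x ∈ J | x ≤ l1 ∧ x ≤ α} = p := fun h => by
    rw [hp, hcard]
    congr 1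
    ext i
    simp only [mem_filter, mem_univ, true_and]
    omega
  have hgap := card_filter_Icc_sdiff_add_card_filter J (l := l1) hαk
  have hsplit := kappa_eq_card_filter_add_card_filter J l1 α
  have hJb : kappa J α ≤ b := by
    simpa [J, card_image_of_injective _ hv.injective] using kappa_le_card J α
  rw [sum_sub_distrib, hfirst, hsecond, kappa_Icc_succ_add]
  omega

/-- with `J = {v_1 < ⋯ < v_b} ⊆ {1,…,k}`, `p = #{i : v_i ≤ l₁}`, and the
complement of `J` in `[l₁+1, k]` labeled `v'_p < v'_{p−1} < ⋯` (labels beyond the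
size of the complement set to `k+1`, i.e. `v'_i` is the `(p−i)`-th (0-based) smallest
element of the complement, defaulting to `k+1`), the componentwise positive part of
`κ(J) − κ([l₁+1, l₁+b])` equals `Σ_{i=1}^p (κ(v_i) − κ(v'_i))`. -/
theorem stmt7 (k l1 b : ℕ) (hl1 : l1 ≤ k) (v : Fin b → ℕ)
    (hv : StrictMono v) (hr : ∀ i, v i ∈ Finset.Icc 1 k)
    (p : ℕ) (hp : p = (Finset.univ.filter (fun i : Fin b => v i ≤ l1)).card)
    (hpb : p ≤ b) :
    ∀ α ∈ Finset.Icc 1 k,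
      max (kappa (Finset.image v Finset.univ) α - kappa (Finset.Icc (l1 + 1) (l1 + b)) α) 0
        = ∑ i : Fin p,
            ((if v (Fin.castLE hpb i) ≤ α then (1 : ℤ) else 0) -
              (if ((Finset.Icc (l1 + 1) k \ Finset.image v Finset.univ).sort (· ≤ ·)).getD
                    (p - ((i : ℕ) + 1)) (k + 1) ≤ α then (1 : ℤ) else 0)) :=
  stmt7_general k l1 b v hv p hp hpb
end

section
/- Fix 0 ≤ l_1, l_2 ≤ k and let (I, J) be an (l_1, l_2)-admissible pair with I = {u_1 < ⋯ < u_a} and J = {v_1 < ⋯ < v_b}. Then the vectors ρ(I,J) = Σ_{i=1}^a (κ(v_i) − κ(u_i)) + Σ_{i=a+1}^p (κ(v_i) − κ(v'_i)) and σ(J) = κ[1, l_2] − κ(J) have all components nonnegative. -/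
theorem List.getD_mem_or_eq_default {α : Type*} (l : List α) (n : ℕ) (d : α) :
    l.getD n d ∈ l ∨ l.getD n d = d := by
  rcases lt_or_ge n l.length with h | h
  · exact .inl (List.getD_eq_getElem l d h ▸ List.getElem_mem h)
  · exact .inr (List.getD_eq_default l d h)

theorem StrictMono.apply_le_of_lt_card_filter {β : Type*} [LinearOrder β] {b : ℕ}
    {v : Fin b → β} (hv : StrictMono v) {c : β} (i : Fin b)
    (hi : (i : ℕ) < (Finset.univ.filter (fun j => v j ≤ c)).card) : v i ≤ c := by
  by_contra! hci
  have hsub : Finset.univ.filter (fun j => v j ≤ c) ⊆ Finset.Iio i := fun j hj =>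
    Finset.mem_Iio.mpr (hv.lt_iff_lt.mp ((Finset.mem_filter.mp hj).2.trans_lt hci))
  have := (Finset.card_le_card hsub).trans_eq (Fin.card_Iio i)
  omega

theorem ite_le_ite_of_le {x y α : ℕ} (h : x ≤ y) :
    (if y ≤ α then (1 : ℤ) else 0) ≤ if x ≤ α then 1 else 0 := by
  split_ifs <;> omega

theorem kappa_Icc_one (l α : ℕ) : kappa (Finset.Icc 1 l) α = min l α := by
  have : (Finset.Icc 1 l).filter (· ≤ α) = Finset.Icc 1 (min l α) := by
    ext x; simp only [Finset.mem_filter, Finset.mem_Icc]; omega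
  simp [kappa, this]

theorem kappa_le_kappa_Icc_one {J : Finset ℕ} {l : ℕ} (hJ : ∀ x ∈ J, 1 ≤ x)
    (hcard : J.card ≤ l) (α : ℕ) : kappa J α ≤ kappa (Finset.Icc 1 l) α := by
  have hsub : J.filter (· ≤ α) ⊆ Finset.Icc 1 α := fun x hx => by
    rw [Finset.mem_filter] at hx
    exact Finset.mem_Icc.mpr ⟨hJ x hx.1, hx.2⟩
  have h1 := Finset.card_le_card (Finset.filter_subset (· ≤ α) J)
  have h2 := (Finset.card_le_card hsub).trans_eq (Nat.card_Icc 1 α)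
  rw [kappa_Icc_one, kappa]
  omega

theorem stmt8_general (k l1 l2 a b : ℕ)
    (u : Fin a → ℕ) (v : Fin b → ℕ) (hv : StrictMono v)
    (hvr : ∀ i, v i ∈ Finset.Icc 1 k)
    (p : ℕ) (hp : p = (Finset.univ.filter (fun i : Fin b => v i ≤ l1)).card)
    (hap : a ≤ p) (hpb : p ≤ b) (hbl2 : b ≤ l2)
    (hadm : ∀ i : Fin a, v (Fin.castLE (hap.trans hpb) i) ≤ u i ∧
      u i < ((Finset.Icc (l1 + 1) k \ Finset.image v Finset.univ).sort (· ≤ ·)).getD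
        (p - ((i : ℕ) + 1)) (k + 1)) :
    ∀ α ∈ Finset.Icc 1 k,
      (0 ≤ (∑ i : Fin a,
            ((if v (Fin.castLE (hap.trans hpb) i) ≤ α then (1 : ℤ) else 0) -
              (if u i ≤ α then (1 : ℤ) else 0)))
          + (∑ i : Fin p, if a ≤ (i : ℕ) then
              ((if v (Fin.castLE hpb i) ≤ α then (1 : ℤ) else 0) -
                (if ((Finset.Icc (l1 + 1) k \ Finset.image v Finset.univ).sort (· ≤ ·)).getD
                      (p - ((i : ℕ) + 1)) (k + 1) ≤ α then (1 : ℤ) else 0))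
              else 0))
        ∧ 0 ≤ kappa (Finset.Icc 1 l2) α - kappa (Finset.image v Finset.univ) α := by
  set C := Finset.Icc (l1 + 1) k \ Finset.image v Finset.univ
  have hv_le : ∀ i : Fin p, v (Fin.castLE hpb i) ≤ min l1 k := fun i =>
    le_min (hv.apply_le_of_lt_card_filter _ (hp ▸ i.isLt)) (Finset.mem_Icc.mp (hvr _)).2
  have hC_gt : ∀ n, min l1 k < (C.sort (· ≤ ·)).getD n (k + 1) := fun n => by
    rcases (C.sort (· ≤ ·)).getD_mem_or_eq_default n (k + 1) with h | h
    · have := (Finset.mem_Icc.mp (Finset.mem_sdiff.mp (Finset.mem_sort _ |>.mp h)).1).1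
      omega
    · omega
  intro α _
  refine ⟨add_nonneg (Finset.sum_nonneg fun i _ => ?_) (Finset.sum_nonneg fun i _ => ?_), ?_⟩
  · exact sub_nonneg.mpr (ite_le_ite_of_le (hadm i).1)
  · split
    · exact sub_nonneg.mpr (ite_le_ite_of_le ((hv_le i).trans (hC_gt _).le))
    · rfl
  · refine sub_nonneg.mpr (kappa_le_kappa_Icc_one ?_ ((Finset.card_image_le).trans ?_) α)
    · simp only [Finset.mem_image, Finset.mem_univ, true_and, forall_exists_index]
      rintro _ i rfl
      exact (Finset.mem_Icc.mp (hvr i)).1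
    · simpa using hbl2

/-- for an `(l₁,l₂)`-admissible pair `(I,J)` with `I = {u_1<⋯<u_a}`,
`J = {v_1<⋯<v_b}`, `p = #{i : v_i ≤ l₁}`, and `v'_i` the decreasing labeling of
`[l₁+1,k] \ J` (with labels beyond the complement size set to `k+1`), the vectors
`ρ(I,J) = Σ_{i=1}^a (κ(v_i) − κ(u_i)) + Σ_{i=a+1}^p (κ(v_i) − κ(v'_i))` and
`σ(J) = κ[1,l₂] − κ(J)` have all components (for `1 ≤ α ≤ k`) nonnegative. -/
theorem stmt8 (k l1 l2 a b : ℕ) (hl1 : l1 ≤ k) (hl2 : l2 ≤ k)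
    (u : Fin a → ℕ) (v : Fin b → ℕ) (hu : StrictMono u) (hv : StrictMono v)
    (hur : ∀ i, u i ∈ Finset.Icc 1 k) (hvr : ∀ i, v i ∈ Finset.Icc 1 k)
    (p : ℕ) (hp : p = (Finset.univ.filter (fun i : Fin b => v i ≤ l1)).card)
    (hap : a ≤ p) (hpb : p ≤ b) (hbl2 : b ≤ l2)
    (hadm : ∀ i : Fin a, v (Fin.castLE (hap.trans hpb) i) ≤ u i ∧
      u i < ((Finset.Icc (l1 + 1) k \ Finset.image v Finset.univ).sort (· ≤ ·)).getD
        (p - ((i : ℕ) + 1)) (k + 1)) :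
    ∀ α ∈ Finset.Icc 1 k,
      (0 ≤ (∑ i : Fin a,
            ((if v (Fin.castLE (hap.trans hpb) i) ≤ α then (1 : ℤ) else 0) -
              (if u i ≤ α then (1 : ℤ) else 0)))
          + (∑ i : Fin p, if a ≤ (i : ℕ) then
              ((if v (Fin.castLE hpb i) ≤ α then (1 : ℤ) else 0) -
                (if ((Finset.Icc (l1 + 1) k \ Finset.image v Finset.univ).sort (· ≤ ·)).getD
                      (p - ((i : ℕ) + 1)) (k + 1) ≤ α then (1 : ℤ) else 0))
              else 0))
        ∧ 0 ≤ kappa (Finset.Icc 1 l2) α - kappa (Finset.image v Finset.univ) α :=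
  stmt8_general k l1 l2 a b u v hv hvr p hp hap hpb hbl2 hadm
end

section
/- Suppose l_1 + c < k. The map 𝔟 : (I,J) ↦ (Ĩ, J̃) is a bijection between: (a) the set of l_1-admissible pairs (I,J) with |I| = a and |J| = a+c, and (b) the set of pairs (Ĩ, J̃) where Ĩ = {u_1 < ⋯ < u_ã} with ã = a + k − l_1 − c and u_{a+1} ≥ l_1 + 1, and J̃ = {v_1 < ⋯ < v_b̃} with b̃ = a + u_{a+1} − l_1 − 1, v_b̃ < u_{a+1}, and v_i ≤ u_i for 1 ≤ i ≤ a. The inverse map is 𝔠(Ĩ, J̃) = (I, J) with I = {u_1,…,u_a} and J = J̃ ⊔ ([u_{a+1}, k] \ Ĩ). -/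
/-!
Everything turns on the threshold `v = v'_a`. Admissibility at `i = a` puts all of `I` below `v`,
so `Ĩ` is `I` followed by the elements `≥ v` of `C = [l₁+1, k] \ J`; hence `u_{a+1} = v`, cutting
`Ĩ` below `v` gives back `I`, and `J̃ = {j ∈ J : j < v}`. Splitting `[l₁+1, v-1]` into the `p - a`
elements of `C` below `v` and the elements of `J` in `(l₁, v)` gives `|J̃|`. Conversely, for
`(I, J) = 𝔠(Ĩ, J̃)` the complement `[l₁+1, k] \ J` is `([l₁+1, u_{a+1}) \ J̃) ⊔ {x ∈ Ĩ : x ≥ u_{a+1}}`,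
whose first part has `p - a` elements by the same count, so again `v'_a = u_{a+1}`.
-/

/-- The `i`-th (0-based) smallest element of a finset of naturals, default `d`. -/
def sortedNth (S : Finset ℕ) (i d : ℕ) : ℕ := (S.sort (· ≤ ·)).getD i d

/-- `p = #{j ∈ J : j ≤ l₁}`. -/
def pOf (l1 : ℕ) (J : Finset ℕ) : ℕ := (J.filter (fun x => x ≤ l1)).card

/-- `v'_i` (paper index `i ≥ 1`): the `(p−i)`-th (0-based) smallest element of the
complement `[l₁+1,k] \ J`, defaulting to `k+1`. -/
def vp (k l1 : ℕ) (J : Finset ℕ) (i : ℕ) : ℕ :=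
  sortedNth (Finset.Icc (l1 + 1) k \ J) (pOf l1 J - i) (k + 1)

/-- `(I,J)` is an `l₁`-admissible pair with `|I| = a`, `|J| = a + c`. -/
def AdmPair (k l1 a c : ℕ) (I J : Finset ℕ) : Prop :=
  I ⊆ Finset.Icc 1 k ∧ J ⊆ Finset.Icc 1 k ∧ I.card = a ∧ J.card = a + c ∧
  a ≤ pOf l1 J ∧
  ∀ i < a, sortedNth J i 0 ≤ sortedNth I i 0 ∧ sortedNth I i 0 < vp k l1 J (i + 1)

/-- `Ĩ = I ⊔ I'`: `I` together with the complement `[l₁+1,k] \ J` minus its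
`p − a` smallest elements. -/
def ItildeOf (k l1 a : ℕ) (I J : Finset ℕ) : Finset ℕ :=
  I ∪ (((Finset.Icc (l1 + 1) k \ J).sort (· ≤ ·)).drop (pOf l1 J - a)).toFinset

/-- `J̃ = J ∩ [1, v'_a − 1]`. -/
def JtildeOf (k l1 a : ℕ) (J : Finset ℕ) : Finset ℕ :=
  J ∩ Finset.Icc 1 (vp k l1 J a - 1)

/-- The conditions (2.17)–(2.18) on the pair `(Ĩ, J̃)`: writing
`Ĩ = {u_1 < ⋯ < u_ã}` with `ã = a + k − l₁ − c`, one requires `u_{a+1} ≥ l₁ + 1`,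
`|J̃| = a + u_{a+1} − l₁ − 1`, all elements of `J̃` are `< u_{a+1}`, and
`v_i ≤ u_i` for `1 ≤ i ≤ a`. -/
def CondB (k l1 a c : ℕ) (It Jt : Finset ℕ) : Prop :=
  It ⊆ Finset.Icc 1 k ∧ Jt ⊆ Finset.Icc 1 k ∧
  It.card = a + k - l1 - c ∧
  l1 + 1 ≤ sortedNth It a 0 ∧
  Jt.card = a + sortedNth It a 0 - l1 - 1 ∧
  (∀ x ∈ Jt, x < sortedNth It a 0) ∧
  ∀ i < a, sortedNth Jt i 0 ≤ sortedNth It i 0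

/-- The inverse map `𝔠(Ĩ, J̃) = (I, J)`: `I` is the set of the `a` smallest
elements of `Ĩ` and `J = J̃ ⊔ ([u_{a+1}, k] \ Ĩ)`. -/
def ccMap (k a : ℕ) (It Jt : Finset ℕ) : Finset ℕ × Finset ℕ :=
  (((It.sort (· ≤ ·)).take a).toFinset,
    Jt ∪ (Finset.Icc (sortedNth It a 0) k \ It))

theorem Finset.sort_union_of_forall_lt {α : Type*} [LinearOrder α] {A B : Finset α}
    (h : ∀ x ∈ A, ∀ y ∈ B, x < y) : (A ∪ B).sort = A.sort ++ B.sort :=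
  (A ∪ B).sortedLT_sort.eq_of_mem_iff
    (List.sortedLT_iff_pairwise.2 <| List.pairwise_append.2
      ⟨A.sortedLT_sort.pairwise, B.sortedLT_sort.pairwise, by simpa using h⟩)
    (by simp)

theorem Finset.sort_eq_sort_filter_lt_append {α : Type*} [LinearOrder α] (S : Finset α) (m : α) :
    S.sort = (S.filter (· < m)).sort ++ (S.filter (m ≤ ·)).sort := by
  conv_lhs => rw [← S.filter_union_filter_not_eq (· < m)]
  simp only [not_lt]
  exact Finset.sort_union_of_forall_lt fun x hx y hy => by
    simp only [Finset.mem_filter] at hx hy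
    exact hx.2.trans_le hy.2

section SortedNth

variable {S : Finset ℕ} {i j n v d : ℕ}

lemma sortedNth_eq_getElem (h : i < S.card) :
    sortedNth S i d = S.sort[i]'(by simpa using h) :=
  List.getD_eq_getElem ..

lemma sortedNth_of_card_le (h : S.card ≤ i) : sortedNth S i d = d :=
  List.getD_eq_default _ _ (by simpa using h)

lemma sortedNth_mem (h : i < S.card) : sortedNth S i d ∈ S := by
  rw [sortedNth_eq_getElem h, ← Finset.mem_sort (· ≤ ·)]
  exact List.getElem_mem _

lemma sortedNth_le_sortedNth (hij : i ≤ j) (hj : j < S.card) :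
    sortedNth S i d ≤ sortedNth S j d := by
  rw [sortedNth_eq_getElem (hij.trans_lt hj), sortedNth_eq_getElem hj]
  exact S.sortedLT_sort.getElem_le_getElem_iff.2 hij

lemma eq_of_sortedNth_eq (hi : i < S.card) (hj : j < S.card)
    (h : sortedNth S i d = sortedNth S j d) : i = j := by
  rw [sortedNth_eq_getElem hi, sortedNth_eq_getElem hj] at h
  exact (S.sort_nodup _).getElem_inj_iff.1 h

lemma sortedNth_mono_of_forall_le (hd : ∀ x ∈ S, x ≤ d) (hij : i ≤ j) :
    sortedNth S i d ≤ sortedNth S j d := by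
  rcases lt_or_ge j S.card with hj | hj
  · exact sortedNth_le_sortedNth hij hj
  · rw [sortedNth_of_card_le (d := d) hj]
    rcases lt_or_ge i S.card with hi | hi
    · exact hd _ (sortedNth_mem hi)
    · rw [sortedNth_of_card_le hi]

lemma card_filter_lt_lt_card (hv : v ∈ S) : (S.filter (· < v)).card < S.card :=
  Finset.card_lt_card (Finset.filter_ssubset.2 ⟨v, hv, lt_irrefl v⟩)

lemma sortedNth_filter_lt (hi : i < (S.filter (· < v)).card) :
    sortedNth (S.filter (· < v)) i d = sortedNth S i d := by
  unfold sortedNth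
  rw [S.sort_eq_sort_filter_lt_append v, List.getD_append _ _ _ _ (by simpa using hi)]

lemma sortedNth_card_filter_lt (hv : v ∈ S) : sortedNth S (S.filter (· < v)).card d = v := by
  have hne : (S.filter (v ≤ ·)).Nonempty := ⟨v, by simp [hv]⟩
  have hmin : sortedNth (S.filter (v ≤ ·)) 0 d = v := by
    rw [sortedNth_eq_getElem (Finset.card_pos.2 hne), Finset.sorted_zero_eq_min']
    exact le_antisymm (Finset.min'_le _ _ (by simp [hv])) (Finset.le_min' _ _ _ (by simp))
  unfold sortedNth at hmin ⊢
  rw [S.sort_eq_sort_filter_lt_append v, List.getD_append_right _ _ _ _ (by simp),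
    Finset.length_sort, Nat.sub_self, hmin]

lemma card_filter_lt_sortedNth (hn : n < S.card) :
    (S.filter (· < sortedNth S n d)).card = n := by
  have hv := sortedNth_mem (d := d) hn
  exact eq_of_sortedNth_eq (card_filter_lt_lt_card hv) hn (sortedNth_card_filter_lt hv)

lemma exists_sortedNth_eq (hv : v ∈ S) : ∃ i < S.card, sortedNth S i d = v :=
  ⟨_, card_filter_lt_lt_card hv, sortedNth_card_filter_lt hv⟩

lemma toFinset_take_sort (hn : n < S.card) :
    (S.sort.take n).toFinset = S.filter (· < sortedNth S n d) := by
  rw [S.sort_eq_sort_filter_lt_append (sortedNth S n d),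
    List.take_left' (by rw [Finset.length_sort, card_filter_lt_sortedNth hn]),
    Finset.sort_toFinset]

lemma toFinset_drop_sort (hn : n < S.card) :
    (S.sort.drop n).toFinset = S.filter (sortedNth S n d ≤ ·) := by
  rw [S.sort_eq_sort_filter_lt_append (sortedNth S n d),
    List.drop_left' (by rw [Finset.length_sort, card_filter_lt_sortedNth hn]),
    Finset.sort_toFinset]

end SortedNth

lemma card_Icc_sdiff_add_card {J : Finset ℕ} {l m : ℕ} (hJ : ∀ x ∈ J, x ≤ m) :
    (Finset.Icc (l + 1) m \ J).card + J.card = m - l + pOf l J := by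
  have hinter : Finset.Icc (l + 1) m ∩ J = J.filter (fun x => ¬ x ≤ l) := by
    ext x
    simp only [Finset.mem_inter, Finset.mem_Icc, Finset.mem_filter]
    constructor
    · rintro ⟨⟨h1, -⟩, hx⟩; exact ⟨hx, by omega⟩
    · rintro ⟨hx, h⟩; exact ⟨⟨by omega, hJ x hx⟩, hx⟩
  have hIcc := Finset.card_sdiff_add_card_inter (Finset.Icc (l + 1) m) J
  have hsplit := J.card_filter_add_card_filter_not (· ≤ l)
  rw [hinter, Nat.card_Icc] at hIcc
  unfold pOf
  omega

lemma vp_antitone (k l1 : ℕ) (J : Finset ℕ) : Antitone (vp k l1 J) := fun _ _ hij =>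
  sortedNth_mono_of_forall_le
    (fun _ hx => (Finset.mem_Icc.1 (Finset.mem_sdiff.1 hx).1).2.trans (Nat.le_succ k))
    (Nat.sub_le_sub_left hij _)

namespace AdmPair

variable {k l1 a c : ℕ} {I J : Finset ℕ}

lemma sub_lt_card_compl (h : AdmPair k l1 a c I J) (hlck : l1 + c < k) :
    pOf l1 J - a < (Finset.Icc (l1 + 1) k \ J).card := by
  have ⟨_, hJ, _, hJc, hap, _⟩ := h
  have := card_Icc_sdiff_add_card (l := l1) fun x hx => (Finset.mem_Icc.1 (hJ hx)).2
  omega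

lemma vp_mem (h : AdmPair k l1 a c I J) (hlck : l1 + c < k) :
    vp k l1 J a ∈ Finset.Icc (l1 + 1) k \ J :=
  sortedNth_mem (h.sub_lt_card_compl hlck)

lemma card_filter_lt_vp (h : AdmPair k l1 a c I J) (hlck : l1 + c < k) :
    ((Finset.Icc (l1 + 1) k \ J).filter (· < vp k l1 J a)).card = pOf l1 J - a :=
  card_filter_lt_sortedNth (h.sub_lt_card_compl hlck)

lemma lt_vp (h : AdmPair k l1 a c I J) {x : ℕ} (hx : x ∈ I) : x < vp k l1 J a := by
  obtain ⟨-, -, hI, -, -, hadm⟩ := h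
  obtain ⟨i, hi, rfl⟩ := exists_sortedNth_eq (d := 0) hx
  calc sortedNth I i 0 ≤ sortedNth I (a - 1) 0 := sortedNth_le_sortedNth (by omega) (by omega)
    _ < vp k l1 J (a - 1 + 1) := (hadm (a - 1) (by omega)).2
    _ = vp k l1 J a := by rw [Nat.sub_add_cancel (by omega)]

lemma itildeOf_eq (h : AdmPair k l1 a c I J) (hlck : l1 + c < k) :
    ItildeOf k l1 a I J = I ∪ (Finset.Icc (l1 + 1) k \ J).filter (vp k l1 J a ≤ ·) := by
  rw [ItildeOf, toFinset_drop_sort (d := k + 1) (h.sub_lt_card_compl hlck)]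
  rfl

lemma filter_itildeOf (h : AdmPair k l1 a c I J) (hlck : l1 + c < k) :
    (ItildeOf k l1 a I J).filter (· < vp k l1 J a) = I := by
  rw [h.itildeOf_eq hlck, Finset.filter_union, Finset.filter_true_of_mem fun _ hx => h.lt_vp hx,
    Finset.filter_false_of_mem fun _ hx => by simpa using (Finset.mem_filter.1 hx).2,
    Finset.union_empty]

lemma sortedNth_itildeOf (h : AdmPair k l1 a c I J) (hlck : l1 + c < k) :
    sortedNth (ItildeOf k l1 a I J) a 0 = vp k l1 J a := by
  have hv : vp k l1 J a ∈ ItildeOf k l1 a I J := by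
    rw [h.itildeOf_eq hlck]
    simpa using Or.inr (h.vp_mem hlck)
  rw [← sortedNth_card_filter_lt hv, h.filter_itildeOf hlck, h.2.2.1]

lemma sortedNth_itildeOf_of_lt (h : AdmPair k l1 a c I J) (hlck : l1 + c < k) {i : ℕ}
    (hi : i < a) : sortedNth (ItildeOf k l1 a I J) i 0 = sortedNth I i 0 := by
  rw [← sortedNth_filter_lt (by rwa [h.filter_itildeOf hlck, h.2.2.1]), h.filter_itildeOf hlck]

lemma card_itildeOf (h : AdmPair k l1 a c I J) (hlck : l1 + c < k) :
    (ItildeOf k l1 a I J).card = a + k - l1 - c := by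
  have ⟨_, hJ, hIc, hJc, hap, _⟩ := h
  have hdisj : Disjoint I ((Finset.Icc (l1 + 1) k \ J).filter (vp k l1 J a ≤ ·)) :=
    Finset.disjoint_left.2 fun x hx hx' => (h.lt_vp hx).not_ge (Finset.mem_filter.1 hx').2
  have hsplit := (Finset.Icc (l1 + 1) k \ J).card_filter_add_card_filter_not (vp k l1 J a ≤ ·)
  simp only [not_le] at hsplit
  rw [h.card_filter_lt_vp hlck] at hsplit
  have := card_Icc_sdiff_add_card (l := l1) fun x hx => (Finset.mem_Icc.1 (hJ hx)).2
  rw [h.itildeOf_eq hlck, Finset.card_union_of_disjoint hdisj, hIc]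
  omega

lemma jtildeOf_eq (h : AdmPair k l1 a c I J) :
    JtildeOf k l1 a J = J.filter (· < vp k l1 J a) := by
  ext x
  have hxJ := fun hx : x ∈ J => Finset.mem_Icc.1 (h.2.1 hx)
  simp only [JtildeOf, Finset.mem_inter, Finset.mem_Icc, Finset.mem_filter]
  constructor
  · rintro ⟨hx, -, h2⟩
    exact ⟨hx, by have := hxJ hx; omega⟩
  · rintro ⟨hx, hlt⟩
    have := hxJ hx
    exact ⟨hx, by omega, by omega⟩

lemma card_jtildeOf (h : AdmPair k l1 a c I J) (hlck : l1 + c < k) :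
    (JtildeOf k l1 a J).card = a + vp k l1 J a - l1 - 1 := by
  have hv := Finset.mem_Icc.1 (Finset.mem_sdiff.1 (h.vp_mem hlck)).1
  generalize hvdef : vp k l1 J a = v at hv ⊢
  have hgap : Finset.Icc (l1 + 1) (v - 1) \ J.filter (· < v) =
      (Finset.Icc (l1 + 1) k \ J).filter (· < v) := by
    ext x
    simp only [Finset.mem_sdiff, Finset.mem_Icc, Finset.mem_filter]
    constructor
    · rintro ⟨⟨h1, h2⟩, hx⟩; exact ⟨⟨⟨h1, by omega⟩, fun hxJ => hx ⟨hxJ, by omega⟩⟩, by omega⟩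
    · rintro ⟨⟨⟨h1, -⟩, hx⟩, hlt⟩; exact ⟨⟨h1, by omega⟩, fun hxJ => hx hxJ.1⟩
  have hcount := card_Icc_sdiff_add_card (l := l1) (J := J.filter (· < v)) (m := v - 1)
    fun x hx => by have := (Finset.mem_filter.1 hx).2; omega
  have hp : pOf l1 (J.filter (· < v)) = pOf l1 J := by
    unfold pOf
    rw [Finset.filter_filter]
    exact congrArg _ (Finset.filter_congr fun x _ => ⟨And.right, fun hx => ⟨by omega, hx⟩⟩)
  rw [hgap, hp, ← hvdef, h.card_filter_lt_vp hlck, hvdef] at hcount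
  have := h.2.2.2.2.1
  rw [h.jtildeOf_eq, hvdef]
  omega

lemma condB_tildeOf (h : AdmPair k l1 a c I J) (hlck : l1 + c < k) :
    CondB k l1 a c (ItildeOf k l1 a I J) (JtildeOf k l1 a J) := by
  have ⟨hI, hJ, _, _, _, hadm⟩ := h
  have hv := Finset.mem_Icc.1 (Finset.mem_sdiff.1 (h.vp_mem hlck)).1
  have hJt := h.card_jtildeOf hlck
  rw [h.jtildeOf_eq] at hJt
  rw [CondB, h.jtildeOf_eq, h.sortedNth_itildeOf hlck]
  refine ⟨?_, (Finset.filter_subset _ _).trans hJ, h.card_itildeOf hlck, hv.1, hJt,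
    fun x hx => (Finset.mem_filter.1 hx).2, fun i hi => ?_⟩
  · rw [h.itildeOf_eq hlck]
    exact Finset.union_subset hI <| (Finset.filter_subset _ _).trans <|
      Finset.sdiff_subset.trans (Finset.Icc_subset_Icc (by omega) le_rfl)
  · rw [sortedNth_filter_lt (by omega), h.sortedNth_itildeOf_of_lt hlck hi]
    exact (hadm i hi).1

lemma ccMap_tildeOf (h : AdmPair k l1 a c I J) (hlck : l1 + c < k) :
    ccMap k a (ItildeOf k l1 a I J) (JtildeOf k l1 a J) = (I, J) := by
  have hv := Finset.mem_Icc.1 (Finset.mem_sdiff.1 (h.vp_mem hlck)).1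
  rw [ccMap, toFinset_take_sort (by rw [h.card_itildeOf hlck]; omega),
    h.sortedNth_itildeOf hlck, h.filter_itildeOf hlck, h.jtildeOf_eq, h.itildeOf_eq hlck]
  congr 1
  ext x
  have hxJ := fun hx : x ∈ J => Finset.mem_Icc.1 (h.2.1 hx)
  simp only [Finset.mem_union, Finset.mem_filter, Finset.mem_sdiff, Finset.mem_Icc]
  constructor
  · rintro (⟨hx, -⟩ | ⟨⟨h1, h2⟩, hC⟩)
    · exact hx
    · by_contra hx
      exact hC (Or.inr ⟨⟨⟨by omega, h2⟩, hx⟩, h1⟩)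
  · intro hx
    by_cases hlt : x < vp k l1 J a
    · exact Or.inl ⟨hx, hlt⟩
    · refine Or.inr ⟨⟨by omega, (hxJ hx).2⟩, ?_⟩
      rintro (hxI | ⟨⟨-, hxJ⟩, -⟩)
      · exact hlt (h.lt_vp hxI)
      · exact hxJ hx

end AdmPair

namespace CondB

variable {k l1 a c : ℕ} {It Jt : Finset ℕ}

/-- The junk value `0` of `sortedNth It a 0` is excluded by `l₁ + 1 ≤ u_{a+1}`. -/
lemma lt_card (h : CondB k l1 a c It Jt) : a < It.card := by
  by_contra! ha
  have := h.2.2.2.1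
  rw [sortedNth_of_card_le ha] at this
  omega

lemma sortedNth_mem (h : CondB k l1 a c It Jt) : sortedNth It a 0 ∈ It :=
  _root_.sortedNth_mem h.lt_card

lemma ccMap_fst (h : CondB k l1 a c It Jt) :
    (ccMap k a It Jt).1 = It.filter (· < sortedNth It a 0) :=
  toFinset_take_sort h.lt_card

lemma filter_ccMap_snd (h : CondB k l1 a c It Jt) :
    (ccMap k a It Jt).2.filter (· < sortedNth It a 0) = Jt := by
  rw [ccMap, Finset.filter_union, Finset.filter_true_of_mem h.2.2.2.2.2.1,
    Finset.filter_false_of_mem fun x hx => by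
      simp only [Finset.mem_sdiff, Finset.mem_Icc, not_lt] at hx ⊢; omega,
    Finset.union_empty]

lemma card_Icc_sdiff_add (h : CondB k l1 a c It Jt) :
    (Finset.Icc (l1 + 1) (sortedNth It a 0 - 1) \ Jt).card + a = pOf l1 Jt := by
  obtain ⟨-, -, -, hu, hJtc, hlt, -⟩ := h
  have := card_Icc_sdiff_add_card (l := l1) fun x hx => Nat.le_sub_one_of_lt (hlt x hx)
  omega

lemma pOf_ccMap_snd (h : CondB k l1 a c It Jt) : pOf l1 (ccMap k a It Jt).2 = pOf l1 Jt := by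
  have hu := h.2.2.2.1
  rw [pOf, ccMap, Finset.filter_union,
    Finset.filter_false_of_mem (s := Finset.Icc (sortedNth It a 0) k \ It) fun x hx => by
      simp only [Finset.mem_sdiff, Finset.mem_Icc] at hx; omega,
    Finset.union_empty]
  rfl

lemma compl_ccMap_snd (h : CondB k l1 a c It Jt) :
    Finset.Icc (l1 + 1) k \ (ccMap k a It Jt).2 =
      (Finset.Icc (l1 + 1) (sortedNth It a 0 - 1) \ Jt) ∪ It.filter (sortedNth It a 0 ≤ ·) := by
  have huk := (Finset.mem_Icc.1 (h.1 h.sortedNth_mem)).2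
  obtain ⟨hIt, -, -, hu, -, hlt, -⟩ := h
  ext x
  have hxIt := fun hx : x ∈ It => (Finset.mem_Icc.1 (hIt hx)).2
  simp only [ccMap, Finset.mem_sdiff, Finset.mem_union, Finset.mem_Icc, Finset.mem_filter]
  constructor
  · rintro ⟨⟨h1, h2⟩, hx⟩
    by_cases hxu : sortedNth It a 0 ≤ x
    · exact Or.inr ⟨by_contra fun hx' => hx (Or.inr ⟨⟨hxu, h2⟩, hx'⟩), hxu⟩
    · exact Or.inl ⟨⟨h1, by omega⟩, fun hx' => hx (Or.inl hx')⟩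
  · rintro (⟨⟨h1, h2⟩, hx⟩ | ⟨hx, hxu⟩)
    · exact ⟨⟨h1, by omega⟩, by rintro (hx' | ⟨⟨h3, -⟩, -⟩); exacts [hx hx', by omega]⟩
    · refine ⟨⟨by omega, hxIt hx⟩, ?_⟩
      rintro (hx' | ⟨-, hx'⟩)
      exacts [absurd (hlt x hx') (not_lt.2 hxu), hx' hx]

lemma mem_compl_ccMap_snd (h : CondB k l1 a c It Jt) :
    sortedNth It a 0 ∈ Finset.Icc (l1 + 1) k \ (ccMap k a It Jt).2 := by
  rw [h.compl_ccMap_snd]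
  exact Finset.mem_union_right _ (Finset.mem_filter.2 ⟨h.sortedNth_mem, le_rfl⟩)

lemma card_filter_compl_ccMap_snd (h : CondB k l1 a c It Jt) :
    ((Finset.Icc (l1 + 1) k \ (ccMap k a It Jt).2).filter (· < sortedNth It a 0)).card =
      pOf l1 (ccMap k a It Jt).2 - a := by
  have hgap := h.card_Icc_sdiff_add
  have hu := h.2.2.2.1
  rw [h.compl_ccMap_snd, Finset.filter_union,
    Finset.filter_true_of_mem fun x hx => by
      simp only [Finset.mem_sdiff, Finset.mem_Icc] at hx; omega,
    Finset.filter_false_of_mem fun x hx => by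
      simp only [Finset.mem_filter, not_lt] at hx ⊢; omega,
    Finset.union_empty, h.pOf_ccMap_snd]
  omega

lemma vp_ccMap_snd (h : CondB k l1 a c It Jt) :
    vp k l1 (ccMap k a It Jt).2 a = sortedNth It a 0 := by
  rw [vp, ← h.card_filter_compl_ccMap_snd]
  exact sortedNth_card_filter_lt h.mem_compl_ccMap_snd

lemma card_ccMap_snd (h : CondB k l1 a c It Jt) : (ccMap k a It Jt).2.card = a + c := by
  have ⟨hIt, _, hItc, hu, hJtc, hlt, _⟩ := h
  have huk := (Finset.mem_Icc.1 (hIt h.sortedNth_mem)).2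
  have hdisj : Disjoint Jt (Finset.Icc (sortedNth It a 0) k \ It) :=
    Finset.disjoint_left.2 fun x hx hx' =>
      (hlt x hx).not_ge (Finset.mem_Icc.1 (Finset.mem_sdiff.1 hx').1).1
  have htail : Finset.Icc (sortedNth It a 0) k ∩ It = It.filter (sortedNth It a 0 ≤ ·) := by
    ext x
    have hxIt := fun hx : x ∈ It => (Finset.mem_Icc.1 (hIt hx)).2
    simp only [Finset.mem_inter, Finset.mem_Icc, Finset.mem_filter]
    exact ⟨fun hx => ⟨hx.2, hx.1.1⟩, fun hx => ⟨⟨hx.2, hxIt hx.1⟩, hx.1⟩⟩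
  have hD := Finset.card_sdiff_add_card_inter (Finset.Icc (sortedNth It a 0) k) It
  have hsplit := It.card_filter_add_card_filter_not (sortedNth It a 0 ≤ ·)
  simp only [not_le] at hsplit
  rw [htail, Nat.card_Icc] at hD
  rw [card_filter_lt_sortedNth h.lt_card] at hsplit
  have := h.lt_card
  rw [ccMap, Finset.card_union_of_disjoint hdisj]
  omega

lemma sortedNth_ccMap_fst (h : CondB k l1 a c It Jt) {i : ℕ} (hi : i < a) :
    sortedNth (ccMap k a It Jt).1 i 0 = sortedNth It i 0 := by
  rw [h.ccMap_fst]
  exact sortedNth_filter_lt (by rwa [card_filter_lt_sortedNth h.lt_card])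

lemma sortedNth_ccMap_snd (h : CondB k l1 a c It Jt) {i : ℕ} (hi : i < a) :
    sortedNth (ccMap k a It Jt).2 i 0 = sortedNth Jt i 0 := by
  have ⟨_, _, _, hu, hJtc, _, _⟩ := h
  rw [← sortedNth_filter_lt (by rw [h.filter_ccMap_snd]; omega), h.filter_ccMap_snd]

lemma admPair_ccMap (h : CondB k l1 a c It Jt) :
    AdmPair k l1 a c (ccMap k a It Jt).1 (ccMap k a It Jt).2 := by
  have ⟨hIt, hJt, _, hu, _, _, hle⟩ := h
  have hI : (ccMap k a It Jt).1.card = a := by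
    rw [h.ccMap_fst]
    exact card_filter_lt_sortedNth h.lt_card
  refine ⟨?_, ?_, hI, h.card_ccMap_snd, ?_, fun i hi => ⟨?_, ?_⟩⟩
  · rw [h.ccMap_fst]
    exact (Finset.filter_subset _ _).trans hIt
  · exact Finset.union_subset hJt
      (Finset.sdiff_subset.trans (Finset.Icc_subset_Icc (by omega) le_rfl))
  · have := h.card_Icc_sdiff_add
    rw [h.pOf_ccMap_snd]
    omega
  · rw [h.sortedNth_ccMap_fst hi, h.sortedNth_ccMap_snd hi]
    exact hle i hi
  · have hmem := _root_.sortedNth_mem (d := 0) (by rwa [hI] : i < (ccMap k a It Jt).1.card)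
    rw [h.ccMap_fst] at hmem ⊢
    calc _ < sortedNth It a 0 := (Finset.mem_filter.1 hmem).2
      _ = vp k l1 (ccMap k a It Jt).2 a := h.vp_ccMap_snd.symm
      _ ≤ vp k l1 (ccMap k a It Jt).2 (i + 1) := vp_antitone _ _ _ hi

lemma itildeOf_ccMap (h : CondB k l1 a c It Jt) :
    ItildeOf k l1 a (ccMap k a It Jt).1 (ccMap k a It Jt).2 = It := by
  have hmem := h.mem_compl_ccMap_snd
  rw [ItildeOf, ← h.card_filter_compl_ccMap_snd,
    toFinset_drop_sort (d := k + 1) (card_filter_lt_lt_card hmem), sortedNth_card_filter_lt hmem,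
    h.compl_ccMap_snd, h.ccMap_fst]
  ext x
  simp only [Finset.mem_union, Finset.mem_filter, Finset.mem_sdiff, Finset.mem_Icc]
  grind

lemma jtildeOf_ccMap (h : CondB k l1 a c It Jt) : JtildeOf k l1 a (ccMap k a It Jt).2 = Jt := by
  rw [JtildeOf, h.vp_ccMap_snd]
  ext x
  have hxJt := fun hx : x ∈ Jt => Finset.mem_Icc.1 (h.2.1 hx)
  have hlt := h.2.2.2.2.2.1 x
  simp only [ccMap, Finset.mem_inter, Finset.mem_union, Finset.mem_sdiff, Finset.mem_Icc]
  grind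

end CondB

theorem stmt11_general (k l1 a c : ℕ) (hlck : l1 + c < k) :
    (∀ I J : Finset ℕ, AdmPair k l1 a c I J →
        CondB k l1 a c (ItildeOf k l1 a I J) (JtildeOf k l1 a J) ∧
        ccMap k a (ItildeOf k l1 a I J) (JtildeOf k l1 a J) = (I, J)) ∧
    (∀ It Jt : Finset ℕ, CondB k l1 a c It Jt →
        AdmPair k l1 a c (ccMap k a It Jt).1 (ccMap k a It Jt).2 ∧
        ItildeOf k l1 a (ccMap k a It Jt).1 (ccMap k a It Jt).2 = It ∧
        JtildeOf k l1 a (ccMap k a It Jt).2 = Jt) :=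
  ⟨fun _ _ h => ⟨h.condB_tildeOf hlck, h.ccMap_tildeOf hlck⟩,
    fun _ _ h => ⟨h.admPair_ccMap, h.itildeOf_ccMap, h.jtildeOf_ccMap⟩⟩

/-- for `l₁ + c < k`, the map `𝔟 : (I,J) ↦ (Ĩ, J̃)` is a bijection
from the set of `l₁`-admissible pairs `(I,J)` with `|I| = a`, `|J| = a + c` onto the
set of pairs `(Ĩ, J̃)` satisfying the conditions `CondB`, with inverse `𝔠`. -/
theorem stmt11 (k l1 a c : ℕ) (hl1 : l1 ≤ k) (hlck : l1 + c < k) (hal1 : a ≤ l1) :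
    (∀ I J : Finset ℕ, AdmPair k l1 a c I J →
        CondB k l1 a c (ItildeOf k l1 a I J) (JtildeOf k l1 a J) ∧
        ccMap k a (ItildeOf k l1 a I J) (JtildeOf k l1 a J) = (I, J)) ∧
    (∀ It Jt : Finset ℕ, CondB k l1 a c It Jt →
        AdmPair k l1 a c (ccMap k a It Jt).1 (ccMap k a It Jt).2 ∧
        ItildeOf k l1 a (ccMap k a It Jt).1 (ccMap k a It Jt).2 = It ∧
        JtildeOf k l1 a (ccMap k a It Jt).2 = Jt) :=
  stmt11_general k l1 a c hlck
end

section
/- Suppose M ≥ 1. Let μ, ν be level-k restricted partitions and l_1 ∈ [0,k]. If r_1^{(α)} ≤ P^{(M)}_{μ,ν}[l_1]_α holds for every α with m_α(μ) ≥ 1 (in particular P^{(M)}_{μ,ν}[l_1]_α ≥ 0 for such α), then P^{(M)}_{μ,ν}[l_1]_k ≥ 0. -/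
/-- The vacancy number `P^{(M)}_{μ,ν}[l]_α = αM − (α−l)⁺ + Σ_β min(α,β)(n_β − 2m_β)`. -/
def Pvac (k M l : ℕ) (mu nu : ℕ → ℕ) (α : ℕ) : ℤ :=
  (α : ℤ) * M - max ((α : ℤ) - l) 0 +
    ∑ β ∈ Finset.Icc 1 k, (min α β : ℤ) * ((nu β : ℤ) - 2 * (mu β : ℤ))

/-!
Let `a` be the largest part of `μ` (or `a = 0` if `μ` is empty). Then `P_a ≥ r_1^{(a)} ≥ 0`
(and `P_0 = 0`). Above `a` the multiplicities of `μ` vanish, so `α ↦ P_α` is nondecreasing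
from `a` on: the sum only picks up the nonnegative terms `min(α, β) m_β(ν)`, and
`αM − (α − l)⁺` is monotone because `M ≥ 1`. Hence `P_k ≥ P_a ≥ 0`.
-/

lemma monotone_mul_sub_posPart {M : ℕ} (hM : 1 ≤ M) (l : ℕ) :
    Monotone fun α : ℕ => (α : ℤ) * M - max ((α : ℤ) - l) 0 := by
  intro a b hab
  have hab : (a : ℤ) ≤ b := by exact_mod_cast hab
  have hM : (1 : ℤ) ≤ M := by exact_mod_cast hM
  have hmax : max ((b : ℤ) - l) 0 - max ((a : ℤ) - l) 0 ≤ b - a := by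
    simpa [max_eq_left (sub_nonneg.2 hab)] using max_sub_max_le_max ((b : ℤ) - l) 0 (a - l) 0
  nlinarith

lemma Pvac_zero (k M l : ℕ) (mu nu : ℕ → ℕ) : Pvac k M l mu nu 0 = 0 := by
  simp [Pvac]

lemma Pvac_le_of_forall_lt_mu_eq_zero {k M : ℕ} (hM : 1 ≤ M) (l : ℕ) {mu : ℕ → ℕ}
    (nu : ℕ → ℕ) {a b : ℕ} (hab : a ≤ b) (hmu : ∀ β ∈ Finset.Icc 1 k, a < β → mu β = 0) :
    Pvac k M l mu nu a ≤ Pvac k M l mu nu b := by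
  refine add_le_add (monotone_mul_sub_posPart hM l hab) (Finset.sum_le_sum fun β hβ => ?_)
  rcases le_or_gt β a with hβa | hβa
  · rw [min_eq_right (by exact_mod_cast hβa), min_eq_right (by exact_mod_cast hβa.trans hab)]
  · simp only [hmu β hβ hβa, Nat.cast_zero, mul_zero, sub_zero]
    gcongr

lemma exists_largest_part (mu : ℕ → ℕ) (k : ℕ) :
    ∃ a ≤ k, (a = 0 ∨ 1 ≤ a ∧ 1 ≤ mu a) ∧ ∀ β ∈ Finset.Icc 1 k, a < β → mu β = 0 := by
  set S := (Finset.Icc 1 k).filter fun β => mu β ≠ 0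
  have hS : ∀ β ∈ Finset.Icc 1 k, mu β ≠ 0 → β ≤ S.sup id := fun β hβ hmu =>
    Finset.le_sup (f := id) (Finset.mem_filter.2 ⟨hβ, hmu⟩)
  have htop : ∀ β ∈ Finset.Icc 1 k, S.sup id < β → mu β = 0 := fun β hβ hlt => by
    by_contra hmu
    exact (hS β hβ hmu).not_gt hlt
  rcases S.eq_empty_or_nonempty with hempty | hne
  · exact ⟨0, k.zero_le, .inl rfl, by simpa [hempty] using htop⟩
  · obtain ⟨a, haS, ha⟩ := Finset.exists_mem_eq_sup S hne id
    obtain ⟨haIcc, hmu⟩ := Finset.mem_filter.1 haS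
    obtain ⟨ha1, hak⟩ := Finset.mem_Icc.1 haIcc
    exact ⟨a, hak, .inr ⟨ha1, Nat.one_le_iff_ne_zero.2 hmu⟩, by simpa [ha] using htop⟩

theorem stmt14_general (k M l1 : ℕ) (hM : 1 ≤ M)
    (mu nu : ℕ → ℕ)
    (r : ℕ → ℕ)
    (hr : ∀ α ∈ Finset.Icc 1 k, 1 ≤ mu α → (r α : ℤ) ≤ Pvac k M l1 mu nu α) :
    0 ≤ Pvac k M l1 mu nu k := by
  obtain ⟨a, hak, ha, htop⟩ := exists_largest_part mu k
  have hPa : 0 ≤ Pvac k M l1 mu nu a := by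
    rcases ha with rfl | ⟨ha1, hmu⟩
    · exact (Pvac_zero k M l1 mu nu).ge
    · exact (Int.natCast_nonneg _).trans (hr a (Finset.mem_Icc.2 ⟨ha1, hak⟩) hmu)
  exact hPa.trans (Pvac_le_of_forall_lt_mu_eq_zero hM l1 nu hak htop)

/-- suppose `M ≥ 1`, and `μ, ν` are level-`k` restricted partitions
(given by their multiplicity functions, supported on `[1,k]`), `0 ≤ l₁ ≤ k`, and `r`
is a rigging of `μ` whose top entries satisfy `r_1^{(α)} ≤ P^{(M)}_{μ,ν}[l₁]_α` for
every `α` with `m_α(μ) ≥ 1`.  Then `P^{(M)}_{μ,ν}[l₁]_k ≥ 0`. -/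
theorem stmt14 (k M l1 : ℕ) (hM : 1 ≤ M) (hk : 1 ≤ k) (hl1 : l1 ≤ k)
    (mu nu : ℕ → ℕ)
    (hmu : ∀ α, (α = 0 ∨ k < α) → mu α = 0) (hnu : ∀ α, (α = 0 ∨ k < α) → nu α = 0)
    (r : ℕ → ℕ)
    (hr : ∀ α ∈ Finset.Icc 1 k, 1 ≤ mu α → (r α : ℤ) ≤ Pvac k M l1 mu nu α) :
    0 ≤ Pvac k M l1 mu nu k :=
  stmt14_general k M l1 hM mu nu r hr
end

section
/- Let μ, ν be level-k restricted partitions, M ≥ 0, l_1 ∈ [0,k], and suppose P^{(M)}_{μ,ν}[l_1]_k ≥ 0 and that for every α with m_α(μ) ≥ 1 one has P^{(M)}_{μ,ν}[l_1]_α ≥ 0. Then P^{(M)}_{μ,ν}[l_1]_α ≥ 0 for every 1 ≤ α ≤ k. (Concavity argument: for 0 ≤ i < j ≤ k with m_α(μ) = 0 for i < α < j, the sequence α ↦ P^{(M)}_{μ,ν}[l_1]_α cannot dip below 0 strictly between two nonnegative values.) -/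
lemma min_key (α β : ℕ) (h : 1 ≤ α) :
    ((min (α + 1) β : ℕ) : ℤ) + ((min (α - 1) β : ℕ) : ℤ) - 2 * ((min α β : ℕ) : ℤ)
      = if β = α then -1 else 0 := by
  rcases lt_trichotomy β α with hlt | heq | hgt
  · have h1 : min (α + 1) β = β := by omega
    have h2 : min (α - 1) β = β := by omega
    have h3 : min α β = β := by omega
    rw [h1, h2, h3, if_neg (by omega)]; ring
  · subst heq
    have h1 : min (β + 1) β = β := by omega
    have h2 : min (β - 1) β = β - 1 := by omega
    have h3 : min β β = β := by omega
    rw [h1, h2, h3, if_pos rfl]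
    push_cast [Nat.cast_sub h]
    ring
  · have h1 : min (α + 1) β = α + 1 := by omega
    have h2 : min (α - 1) β = α - 1 := by omega
    have h3 : min α β = α := by omega
    rw [h1, h2, h3, if_neg (by omega)]
    push_cast [Nat.cast_sub h]
    ring

lemma Pvac_concave (k M l : ℕ) (mu nu : ℕ → ℕ) (α : ℕ) (h1 : 1 ≤ α) (h2 : α + 1 ≤ k)
    (hm : mu α = 0) :
    Pvac k M l mu nu (α + 1) + Pvac k M l mu nu (α - 1) ≤ 2 * Pvac k M l mu nu α := by
  set c : ℕ → ℤ := fun β => (nu β : ℤ) - 2 * (mu β : ℤ) with hc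
  have hsum : (∑ β ∈ Finset.Icc 1 k, (min (α + 1) β : ℤ) * c β)
      + (∑ β ∈ Finset.Icc 1 k, (min (α - 1) β : ℤ) * c β)
      - 2 * ∑ β ∈ Finset.Icc 1 k, (min α β : ℤ) * c β = -(c α) := by
    rw [Finset.mul_sum, ← Finset.sum_add_distrib, ← Finset.sum_sub_distrib]
    have heq : ∀ β ∈ Finset.Icc 1 k,
        (min (α + 1) β : ℤ) * c β + (min (α - 1) β : ℤ) * c β - 2 * ((min α β : ℤ) * c β)
          = if β = α then -(c β) else 0 := by
      intro β _
      have hmk := min_key α β h1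
      push_cast [Nat.cast_sub h1] at hmk
      split
      · next hb => rw [if_pos hb] at hmk; linear_combination (c β) * hmk
      · next hb => rw [if_neg hb] at hmk; linear_combination (c β) * hmk
    rw [Finset.sum_congr rfl heq, Finset.sum_ite_eq' (Finset.Icc 1 k) α]
    rw [if_pos (by simp; omega)]
  have hca : 0 ≤ c α := by rw [hc]; simp [hm]
  have hmax : 2 * max ((α : ℤ) - l) 0 ≤ max ((α : ℤ) + 1 - l) 0 + max ((α : ℤ) - 1 - l) 0 := by
    rcases le_total ((α : ℤ) - l) 0 with h | h
    · have a1 := le_max_right ((α : ℤ) + 1 - l) (0 : ℤ)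
      have a2 := le_max_right ((α : ℤ) - 1 - l) (0 : ℤ)
      rw [max_eq_right h]; linarith
    · rw [max_eq_left h]
      have a1 := le_max_left ((α : ℤ) + 1 - l) (0 : ℤ)
      have a2 := le_max_left ((α : ℤ) - 1 - l) (0 : ℤ)
      linarith
  unfold Pvac
  push_cast [Nat.cast_sub h1] at hsum ⊢
  linarith [hsum, hmax, hca]

/-- let `μ, ν` be level-`k` restricted partitions (multiplicity
functions supported on `[1,k]`), `M ≥ 0`, `0 ≤ l₁ ≤ k`.  If `P^{(M)}_{μ,ν}[l₁]_k ≥ 0`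
and `P^{(M)}_{μ,ν}[l₁]_α ≥ 0` for every `α` with `m_α(μ) ≥ 1`, then
`P^{(M)}_{μ,ν}[l₁]_α ≥ 0` for every `1 ≤ α ≤ k`. -/
theorem stmt15 (k M l1 : ℕ) (hk : 1 ≤ k) (hl1 : l1 ≤ k)
    (mu nu : ℕ → ℕ)
    (hmu : ∀ α, (α = 0 ∨ k < α) → mu α = 0) (hnu : ∀ α, (α = 0 ∨ k < α) → nu α = 0)
    (hPk : 0 ≤ Pvac k M l1 mu nu k)
    (hP : ∀ α ∈ Finset.Icc 1 k, 1 ≤ mu α → 0 ≤ Pvac k M l1 mu nu α) :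
    ∀ α ∈ Finset.Icc 1 k, 0 ≤ Pvac k M l1 mu nu α := by
  set P : ℕ → ℤ := Pvac k M l1 mu nu with hPdef
  by_contra hcon
  push_neg at hcon
  obtain ⟨α0, hα0, hneg⟩ := hcon
  -- set of minimizers of P over Icc 0 k
  have hSne : (Finset.Icc 0 k).Nonempty := ⟨0, by simp⟩
  obtain ⟨m, hmS, hmin⟩ := Finset.exists_min_image (Finset.Icc 0 k) P hSne
  set T : Finset ℕ := (Finset.Icc 0 k).filter (fun a => P a = P m) with hT
  have hTne : T.Nonempty := ⟨m, by simp only [hT, Finset.mem_filter]; exact ⟨hmS, trivial⟩⟩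
  set a := T.max' hTne with ha
  have haT : a ∈ T := T.max'_mem hTne
  rw [hT, Finset.mem_filter] at haT
  obtain ⟨haS, haval⟩ := haT
  have hamin : ∀ b ∈ Finset.Icc 0 k, P a ≤ P b := fun b hb => haval ▸ hmin b hb
  have hak : a ≤ k := by simp at haS; exact haS
  have hα0S : α0 ∈ Finset.Icc 0 k := by simp at hα0 ⊢; omega
  have haneg : P a < 0 := lt_of_le_of_lt (hamin α0 hα0S) hneg
  have ha0 : a ≠ 0 := by
    intro h; rw [h, hPdef, Pvac_zero] at haneg; exact absurd haneg (by norm_num)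
  have hak' : a ≠ k := by
    intro h; rw [h] at haneg; linarith
  have h1a : 1 ≤ a := Nat.one_le_iff_ne_zero.mpr ha0
  have hak1 : a + 1 ≤ k := by omega
  have hmua : mu a = 0 := by
    by_contra hne
    have : 0 ≤ P a := hP a (by simp; omega) (by omega)
    linarith
  have hconc := Pvac_concave k M l1 mu nu a h1a hak1 hmua
  have hle1 : P a ≤ P (a - 1) := hamin (a - 1) (by simp; omega)
  have hlt2 : P a < P (a + 1) := by
    by_contra hge
    push_neg at hge
    have hin : a + 1 ∈ T := by
      rw [hT, Finset.mem_filter]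
      refine ⟨by simp; omega, le_antisymm (hge.trans haval.le) (haval ▸ hmin (a+1) (by simp; omega))⟩
    have := Finset.le_max' T (a + 1) hin
    omega
  rw [← hPdef] at hconc
  linarith
end

section
/- Let F(x_1,…,x_m; y_1,…,y_n) = p / ∏_{i,j}(x_i − y_j), where p is a Laurent polynomial symmetric separately in the x variables and in the y variables and vanishing on x_1 = x_2 = y_1 and on x_1 = y_1 = y_2. Then the function obtained from (x_1 − y_1)·F by setting x_1 = y_1 has no pole at y_1 = y_j for j ≥ 2 and no pole at y_1 = x_i for i ≥ 2; i.e., its only possible pole in y_1 is at y_1 = 0. -/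
/-!
Put `q = p|_{x₁ = y₁}`. For `w` one of `x₂, …, x_m, y₂, …, y_n`, setting further `y₁ = w` restricts
`p` to the diagonal `x₁ = y₁ = w`. The hypotheses say that `p` vanishes on `x₁ = x₂ = y₁` and on
`x₁ = y₁ = y₂`, and the symmetry swapping `x₂ ↔ x_i` (resp. `y₂ ↔ y_j`) moves these diagonals onto
all the others. So `q` vanishes at `y₁ = w` for every such `w`; as a polynomial in `y₁` over the
remaining variables, `q` then has the distinct roots `w`, hence is divisible by `∏ (y₁ - w)`.
-/

namespace Polynomial

theorem prod_X_sub_C_dvd_of_isRoot {R ι : Type*} [CommRing R] [IsDomain R] {s : Finset ι}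
    {c : ι → R} (hc : Set.InjOn c s) {P : R[X]} (h : ∀ i ∈ s, P.IsRoot (c i)) :
    ∏ i ∈ s, (X - C (c i)) ∣ P := by
  rcases eq_or_ne P 0 with rfl | hP
  · exact dvd_zero _
  have hroots : s.val.map c ≤ P.roots := by
    rw [Multiset.le_iff_subset (Multiset.nodup_map_iff_inj_on s.nodup |>.2 hc)]
    intro r hr
    obtain ⟨i, hi, rfl⟩ := Multiset.mem_map.1 hr
    exact (mem_roots hP).2 (h i hi)
  have := (Multiset.prod_X_sub_C_dvd_iff_le_roots hP _).2 hroots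
  rwa [Multiset.map_map] at this

end Polynomial

namespace MvPolynomial

variable {σ R : Type*} [DecidableEq σ]

section CommSemiring

variable [CommSemiring R]

variable (R) in
noncomputable def mergeVars (S : Finset σ) (c : σ) : σ → MvPolynomial σ R :=
  fun v => if v ∈ S then X c else X v

theorem mergeVars_singleton_self (a : σ) : mergeVars R {a} a = X := by
  funext v; by_cases hv : v = a <;> simp [mergeVars, hv]

theorem mergeVars_insert_self (S : Finset σ) (c : σ) :
    mergeVars R (insert c S) c = mergeVars R S c := by
  funext v; by_cases hv : v = c <;> simp [mergeVars, hv]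

theorem mergeVars_singleton (a c : σ) :
    mergeVars R {a} c = fun v => if v = a then X c else X v := by
  funext v; simp [mergeVars]

theorem mergeVars_pair (a b c : σ) :
    mergeVars R {a, b} c = fun v => if v = a ∨ v = b then X c else X v := by
  funext v; simp [mergeVars]

theorem aeval_mergeVars_aeval_mergeVars {S T : Finset σ} {c c' : σ} (hc : c ∈ T)
    (p : MvPolynomial σ R) :
    aeval (mergeVars R T c') (aeval (mergeVars R S c) p) = aeval (mergeVars R (S ∪ T) c') p := by
  rw [comp_aeval_apply]
  congr 2
  funext v
  by_cases hS : v ∈ S <;> by_cases hT : v ∈ T <;> simp [mergeVars, hS, hT, hc]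

theorem rename_aeval_mergeVars (e : σ ≃ σ) (S : Finset σ) (c : σ) (p : MvPolynomial σ R) :
    rename e (aeval (mergeVars R S c) p) =
      aeval (mergeVars R (S.map e.toEmbedding) (e c)) (rename e p) := by
  rw [aeval_rename, comp_aeval_apply]
  congr 2
  funext v
  by_cases hS : v ∈ S <;> simp [mergeVars, hS]

theorem aeval_mergeVars_eq_zero_of_mem {p : MvPolynomial σ R} {S : Finset σ} {c : σ}
    (hc : c ∈ S) (h : aeval (mergeVars R S c) p = 0) (c' : σ) :
    aeval (mergeVars R S c') p = 0 := by
  rw [← Finset.union_self S, ← aeval_mergeVars_aeval_mergeVars hc, h, map_zero]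

theorem aeval_mergeVars_map_eq_zero {p : MvPolynomial σ R} {e : σ ≃ σ} (he : rename e p = p)
    {S : Finset σ} {c : σ} (hc : c ∈ S) (h : aeval (mergeVars R S c) p = 0) (c' : σ) :
    aeval (mergeVars R (S.map e.toEmbedding) c') p = 0 := by
  refine aeval_mergeVars_eq_zero_of_mem (c := e c) (by simpa using hc) ?_ c'
  rw [← he, ← rename_aeval_mergeVars, h, map_zero]

theorem aeval_mergeVars_pair_eq_zero_of_swap {p : MvPolynomial σ R} {a b c d : σ}
    (hsymm : rename (Equiv.swap c d) p = p) (hac : a ≠ c) (had : a ≠ d) (hbc : b ≠ c)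
    (hbd : b ≠ d) (h : aeval (mergeVars R {b, c} a) p = 0) :
    aeval (mergeVars R {a, b} d) p = 0 := by
  rw [← mergeVars_insert_self] at h
  have h' := aeval_mergeVars_map_eq_zero hsymm (Finset.mem_insert_self _ _) h d
  simp only [Finset.map_insert, Finset.map_singleton, Equiv.coe_toEmbedding,
    Equiv.swap_apply_of_ne_of_ne hac had, Equiv.swap_apply_of_ne_of_ne hbc hbd,
    Equiv.swap_apply_left] at h'
  rwa [Finset.pair_comm b d, Finset.insert_comm, mergeVars_insert_self] at h'

theorem aeval_mergeVars_inl_eq_zero {α β : Type*} [DecidableEq α] [DecidableEq β]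
    {p : MvPolynomial (α ⊕ β) R} (hsymm : ∀ e : Equiv.Perm α, rename (Sum.map e id) p = p)
    {a a' a'' : α} {b : β} (ha' : a ≠ a') (ha'' : a ≠ a'')
    (h : aeval (mergeVars R {Sum.inr b, Sum.inl a'} (Sum.inl a)) p = 0) :
    aeval (mergeVars R {Sum.inl a, Sum.inr b} (Sum.inl a'')) p = 0 :=
  aeval_mergeVars_pair_eq_zero_of_swap (by rw [← Equiv.Perm.sumCongr_swap_refl]; exact hsymm _)
    (by simpa using ha') (by simpa using ha'') (by simp) (by simp) h

theorem aeval_mergeVars_inr_eq_zero {α β : Type*} [DecidableEq α] [DecidableEq β]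
    {p : MvPolynomial (α ⊕ β) R} (hsymm : ∀ e : Equiv.Perm β, rename (Sum.map id e) p = p)
    {a : α} {b b' b'' : β} (hb' : b ≠ b') (hb'' : b ≠ b'')
    (h : aeval (mergeVars R {Sum.inr b, Sum.inr b'} (Sum.inl a)) p = 0) :
    aeval (mergeVars R {Sum.inl a, Sum.inr b} (Sum.inr b'')) p = 0 :=
  aeval_mergeVars_pair_eq_zero_of_swap (by rw [← Equiv.Perm.sumCongr_refl_swap]; exact hsymm _)
    (by simp) (by simp) (by simpa using hb') (by simpa using hb'') h

end CommSemiring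

section CommRing

variable [CommRing R] [IsDomain R]

theorem prod_X_sub_X_dvd {a : σ} {s : Finset σ} {q : MvPolynomial σ R}
    (h : ∀ b ∈ s, aeval (mergeVars R {a} b) q = 0) : ∏ b ∈ s, (X a - X b) ∣ q := by
  by_cases ha : a ∈ s
  · obtain rfl : q = 0 := by simpa [mergeVars_singleton_self] using h a ha
    exact dvd_zero _
  let T : MvPolynomial σ R →ₐ[R] Polynomial (MvPolynomial σ R) :=
    aeval fun v => if v = a then Polynomial.X else Polynomial.C (X v)
  let ev (b : σ) : Polynomial (MvPolynomial σ R) →ₐ[R] MvPolynomial σ R :=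
    (Polynomial.aeval (X b)).restrictScalars R
  have hevT (b : σ) (r : MvPolynomial σ R) : ev b (T r) = aeval (mergeVars R {a} b) r := by
    rw [comp_aeval_apply]
    congr 2
    funext v
    by_cases hv : v = a <;> simp [ev, mergeVars, hv]
  have hTdvd : T (∏ b ∈ s, (X a - X b)) ∣ T q := by
    have hTfactor : ∀ b ∈ s, T (X a - X b) = Polynomial.X - Polynomial.C (X b) := fun b hb => by
      have hb : b ≠ a := fun hba => ha (hba ▸ hb)
      simp [T, hb]
    rw [map_prod, Finset.prod_congr rfl hTfactor]
    refine Polynomial.prod_X_sub_C_dvd_of_isRoot X_injective.injOn fun b hb => ?_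
    rw [Polynomial.IsRoot, ← Polynomial.coe_aeval_eq_eval, ← h b hb, ← hevT]
    rfl
  simpa [hevT, mergeVars_singleton_self] using map_dvd (ev a) hTdvd

end CommRing

end MvPolynomial

open MvPolynomial

/-- let `F = p / ∏_{i,j}(x_i − y_j)` where `p` is a (Laurent)
polynomial symmetric separately in the `x` and `y` variables, vanishing on
`x₁ = x₂ = y₁` and on `x₁ = y₁ = y₂`.  Then `((x₁ − y₁)·F)|_{x₁ = y₁}` has no pole
at `y₁ = y_j` (`j ≥ 2`) nor at `y₁ = x_i` (`i ≥ 2`); equivalently, the numerator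
`p|_{x₁ = y₁}` is divisible by `∏_{j=2}^n (y₁ − y_j) · ∏_{i=2}^m (x_i − y₁)`,
which are exactly the factors of the remaining denominator
`∏_{(i,j)≠(1,1)} (x_i − y_j)|_{x₁=y₁}` that can vanish as functions of `y₁`
other than at `y₁ = 0`.  (A Laurent polynomial differs from a polynomial by a unit
monomial, which affects neither the hypotheses nor the divisibility.) -/
theorem stmt16 (m n : ℕ) (hm : 1 ≤ m) (hn : 1 ≤ n)
    (p : MvPolynomial (Fin m ⊕ Fin n) ℚ)
    (hx : ∀ σ : Equiv.Perm (Fin m), rename (Sum.map σ id) p = p)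
    (hy : ∀ σ : Equiv.Perm (Fin n), rename (Sum.map id σ) p = p)
    (hserre1 : ∀ (hm2 : 2 ≤ m) (hn1 : 1 ≤ n),
      aeval (fun v : Fin m ⊕ Fin n =>
        if v = Sum.inl ⟨1, hm2⟩ ∨ v = Sum.inr ⟨0, hn1⟩
        then (X (Sum.inl (⟨0, by omega⟩ : Fin m)) : MvPolynomial (Fin m ⊕ Fin n) ℚ)
        else X v) p = 0)
    (hserre2 : ∀ (hm1 : 1 ≤ m) (hn2 : 2 ≤ n),
      aeval (fun v : Fin m ⊕ Fin n =>
        if v = Sum.inr (⟨0, by omega⟩ : Fin n) ∨ v = Sum.inr ⟨1, hn2⟩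
        then (X (Sum.inl (⟨0, hm1⟩ : Fin m)) : MvPolynomial (Fin m ⊕ Fin n) ℚ)
        else X v) p = 0) :
    ((∏ j ∈ Finset.univ.filter (fun j : Fin n => 0 < (j : ℕ)),
        ((X (Sum.inr (⟨0, hn⟩ : Fin n)) : MvPolynomial (Fin m ⊕ Fin n) ℚ) - X (Sum.inr j))) *
      (∏ i ∈ Finset.univ.filter (fun i : Fin m => 0 < (i : ℕ)),
        ((X (Sum.inl i) : MvPolynomial (Fin m ⊕ Fin n) ℚ) - X (Sum.inr (⟨0, hn⟩ : Fin n))))) ∣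
      aeval (fun v : Fin m ⊕ Fin n =>
        if v = Sum.inl (⟨0, hm⟩ : Fin m)
        then (X (Sum.inr (⟨0, hn⟩ : Fin n)) : MvPolynomial (Fin m ⊕ Fin n) ℚ)
        else X v) p := by
  set x₀ : Fin m ⊕ Fin n := Sum.inl ⟨0, hm⟩
  set y₀ : Fin m ⊕ Fin n := Sum.inr ⟨0, hn⟩
  have hdiag : ∀ w ∈ (Finset.univ.filter fun i : Fin m => 0 < (i : ℕ)).disjSum
      (Finset.univ.filter fun j : Fin n => 0 < (j : ℕ)),
      aeval (mergeVars ℚ {y₀} w) (aeval (mergeVars ℚ {x₀} y₀) p) = 0 := by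
    intro w hw
    rw [aeval_mergeVars_aeval_mergeVars (Finset.mem_singleton_self _), ← Finset.insert_eq]
    rcases Finset.mem_disjSum.1 hw with ⟨i, hi, rfl⟩ | ⟨j, hj, rfl⟩
    · have hi : 0 < (i : ℕ) := (Finset.mem_filter.1 hi).2
      have hm2 : 2 ≤ m := by omega
      refine aeval_mergeVars_inl_eq_zero hx (a' := ⟨1, hm2⟩) (by simp [Fin.ext_iff])
        (by simp [Fin.ext_iff]; omega) ?_
      rw [Finset.pair_comm, mergeVars_pair]
      exact hserre1 hm2 hn
    · have hj : 0 < (j : ℕ) := (Finset.mem_filter.1 hj).2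
      have hn2 : 2 ≤ n := by omega
      refine aeval_mergeVars_inr_eq_zero hy (b' := ⟨1, hn2⟩) (by simp [Fin.ext_iff])
        (by simp [Fin.ext_iff]; omega) ?_
      rw [mergeVars_pair]
      exact hserre2 hm hn2
  have hdvd := prod_X_sub_X_dvd hdiag
  rw [Finset.prod_disjSum, mul_comm] at hdvd
  rw [← mergeVars_singleton]
  refine dvd_trans (mul_dvd_mul_left _ (Finset.prod_dvd_prod_of_dvd _ _ fun i _ => ?_)) hdvd
  rw [← neg_sub]
  exact neg_dvd.2 dvd_rfl
end

section
/- Let f(x_1,…,x_α; y) be a polynomial, where f is obtained from a polynomial F(x_1,…,x_α; y_1,…,y_β) symmetric in the y variables that vanishes whenever x_i = y_j = y_t (j ≠ t), by setting all y variables equal to y: f = F(x_1,…,x_α; y,…,y). Then for each i, (∂/∂y)^s f vanishes on x_i = y for s = 0, 1, …, β−2; consequently f is divisible by ∏_{i=1}^α (x_i − y)^{β−1}. -/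
/-!
By the chain rule, `(∂/∂y)^s f` is a sum of specializations `y_• ↦ y` of mixed derivatives
`∂_{y_{m_1}} ⋯ ∂_{y_{m_s}} F`. When `s ≤ β - 2` two indices `j ≠ t` are missed; derivatives in the
remaining `y`-variables commute with the substitution `x_i, y_t ↦ y_j`, so each of these
derivatives still vanishes on `x_i = y_j = y_t`, and hence `(∂/∂y)^s f` vanishes on `x_i = y`.

Conversely, if `∂_w^s f` vanishes on `v = w` for all `s < n`, then `(X v - X w)^n ∣ f`: peel off
one factor at a time, since `∂_w^n ((X v - X w)^n g) = (-1)^n n! g` on `v = w` (here the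
characteristic is `0`). The factors `x_i - y` are pairwise non-associated primes.
-/

open MvPolynomial Function Finset

theorem iterate_map_sum {ι M F : Type*} [AddCommMonoid M] [FunLike F M M] [AddMonoidHomClass F M M]
    (f : F) (n : ℕ) (s : Finset ι) (g : ι → M) :
    (⇑f)^[n] (∑ i ∈ s, g i) = ∑ i ∈ s, (⇑f)^[n] (g i) := by
  induction n with
  | zero => rfl
  | succ n ih => simp [iterate_succ_apply', ih, map_sum]

namespace MvPolynomial

section ChainRule
variable {R σ τ : Type*} [CommSemiring R] [Fintype σ] [DecidableEq σ] [DecidableEq τ]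

theorem pderiv_rename_eq_sum (g : σ → τ) (k : τ) (p : MvPolynomial σ R) :
    pderiv k (rename g p) = ∑ v with g v = k, rename g (pderiv v p) := by
  induction p using MvPolynomial.induction_on with
  | C a => simp
  | add p q hp hq => simp [hp, hq, sum_add_distrib]
  | mul_X p n hp =>
    simp only [map_mul, rename_X, Derivation.leibniz, pderiv_X, hp, smul_eq_mul, map_add,
      sum_add_distrib, mul_sum, Pi.single_apply, mul_ite, mul_one, mul_zero]
    simp [apply_ite (rename g), sum_ite_eq]

theorem pderiv_rename_of_fiber_eq {g : σ → τ} {k : τ} {v₀ : σ} (h : ∀ v, g v = k ↔ v = v₀)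
    (p : MvPolynomial σ R) : pderiv k (rename g p) = rename g (pderiv v₀ p) := by
  simp [pderiv_rename_eq_sum, h, filter_eq']

end ChainRule

theorem aeval_eq_rename {R σ τ : Type*} [CommSemiring R] {φ : σ → MvPolynomial τ R} {g : σ → τ}
    (h : ∀ v, φ v = X (g v)) (p : MvPolynomial σ R) : aeval φ p = rename g p := by
  rw [rename_eq_aeval, show φ = X ∘ g from _root_.funext h]

section Specialization
variable {R σ : Type*} [CommRing R] [DecidableEq σ]

theorem rename_update_X_sub_X (v w : σ) :
    rename (update id v w) (X v - X w : MvPolynomial σ R) = 0 := by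
  by_cases h : w = v
  · simp [h]
  · simp [update_of_ne h]

theorem X_sub_X_dvd_sub_rename_update (v w : σ) (q : MvPolynomial σ R) :
    X v - X w ∣ q - rename (update id v w) q := by
  rw [← Ideal.mem_span_singleton, ← Ideal.Quotient.eq]
  have hcomp : (Ideal.Quotient.mkₐ R _).comp (rename (update id v w)) =
      Ideal.Quotient.mkₐ R (Ideal.span {(X v - X w : MvPolynomial σ R)}) := by
    ext u
    by_cases hu : u = v
    · subst hu
      simpa using Ideal.Quotient.eq.mpr (Ideal.mem_span_singleton.mpr ⟨-1, by ring⟩)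
    · simp [update_of_ne hu]
  exact (DFunLike.congr_fun hcomp q).symm

theorem rename_update_iterate_pderiv_X_sub_X_pow_mul {v w : σ} (hvw : v ≠ w) (n : ℕ)
    (h : MvPolynomial σ R) :
    rename (update id v w) ((⇑(pderiv w))^[n] ((X v - X w) ^ n * h)) =
      (-1) ^ n * (n.factorial : MvPolynomial σ R) * rename (update id v w) h := by
  induction n generalizing h with
  | zero => simp
  | succ n ih =>
    have hderiv : pderiv w ((X v - X w) ^ (n + 1) * h) =
        (X v - X w) ^ n * (-((n : MvPolynomial σ R) + 1) * h + (X v - X w) * pderiv w h) := by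
      simp only [Derivation.leibniz, Derivation.leibniz_pow, map_sub, pderiv_X_self,
        pderiv_X_of_ne hvw, smul_eq_mul, add_tsub_cancel_right, nsmul_eq_mul]
      push_cast
      ring
    rw [iterate_succ_apply, hderiv, ih]
    simp only [map_add, map_mul, map_neg, map_natCast, map_one, rename_update_X_sub_X, zero_mul,
      add_zero]
    push_cast [Nat.factorial_succ]
    ring

theorem X_sub_X_pow_dvd_of_rename_update_iterate_pderiv_eq_zero [IsDomain R] [CharZero R]
    {v w : σ} (hvw : v ≠ w) {f : MvPolynomial σ R} {n : ℕ}
    (hf : ∀ s < n, rename (update id v w) ((⇑(pderiv w))^[s] f) = 0) :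
    (X v - X w) ^ n ∣ f := by
  induction n with
  | zero => simp
  | succ n ih =>
    obtain ⟨g, rfl⟩ := ih fun s hs => hf s (hs.trans n.lt_succ_self)
    have hg : rename (update id v w) g = 0 := by
      have h := hf n n.lt_succ_self
      rw [rename_update_iterate_pderiv_X_sub_X_pow_mul hvw] at h
      simpa [Nat.factorial_ne_zero] using h
    obtain ⟨k, hk⟩ := X_sub_X_dvd_sub_rename_update v w g
    rw [hg, sub_zero] at hk
    exact ⟨k, by rw [hk, pow_succ, mul_assoc]⟩

theorem prime_X_sub_X [IsDomain R] {v w : σ} (hvw : v ≠ w) :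
    Prime (X v - X w : MvPolynomial σ R) := by
  let e := (renameEquiv R (Equiv.optionSubtypeNe v).symm).trans
    (optionEquivLeft R {u : σ // u ≠ v})
  have he : e (X v - X w) = Polynomial.X - Polynomial.C (X ⟨w, hvw.symm⟩) := by
    simp [e, Equiv.optionSubtypeNe_symm_of_ne hvw.symm]
  rw [← MulEquiv.prime_iff e.toMulEquiv]
  exact he ▸ Polynomial.prime_X_sub_C _

theorem isRelPrime_X_sub_X [IsDomain R] {u v w : σ} (huv : u ≠ v) (huw : u ≠ w)
    (hvw : v ≠ w) : IsRelPrime (X u - X w : MvPolynomial σ R) (X v - X w) := by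
  refine (prime_X_sub_X huw).irreducible.isRelPrime_iff_not_dvd.mpr fun hdvd => ?_
  have := map_dvd (eval (fun x => if x = v then (1 : R) else 0)) hdvd
  simp [huv, hvw.symm] at this

end Specialization
end MvPolynomial

section Collapse

variable {R ι κ : Type*} [CommSemiring R]

/-- The specialization `y_j ↦ y₀` of all right-hand variables, which turns `F` into `f`. -/
def collapseRight (y₀ : κ) : ι ⊕ κ → ι ⊕ κ :=
  Sum.elim Sum.inl fun _ => Sum.inr y₀

@[simp]
theorem collapseRight_inl (y₀ : κ) (a : ι) : collapseRight y₀ (Sum.inl a) = Sum.inl a := rfl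

@[simp]
theorem collapseRight_inr (y₀ b : κ) : collapseRight (ι := ι) y₀ (Sum.inr b) = Sum.inr y₀ := rfl

variable [DecidableEq ι] [DecidableEq κ]

/-- The substitution `x_i, y_t ↦ y_j`; its kernel is the ideal of the subvariety
`x_i = y_j = y_t`. -/
def identifyVars (i : ι) (j t : κ) (v : ι ⊕ κ) : ι ⊕ κ :=
  if v = Sum.inl i ∨ v = Sum.inr t then Sum.inr j else v

theorem identifyVars_eq_inr_iff {i : ι} {j t m : κ} (hj : m ≠ j) (ht : m ≠ t) (v : ι ⊕ κ) :
    identifyVars i j t v = Sum.inr m ↔ v = Sum.inr m := by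
  unfold identifyVars
  split_ifs with h
  · rcases h with rfl | rfl <;> simp [hj.symm, ht.symm]
  · rfl

theorem update_comp_collapseRight_eq_collapseRight_comp_identifyVars (i : ι) (j t y₀ : κ) :
    update id (Sum.inl i) (Sum.inr y₀) ∘ collapseRight y₀ =
      collapseRight y₀ ∘ identifyVars i j t := by
  funext v
  rcases v with a | b
  · by_cases h : a = i <;> simp [identifyVars, h]
  · simp [identifyVars, apply_ite (collapseRight y₀)]

variable [Fintype ι] [Fintype κ]

theorem rename_identifyVars_pderiv_eq_zero {i : ι} {j t m : κ} (hj : m ≠ j) (ht : m ≠ t)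
    {G : MvPolynomial (ι ⊕ κ) R} (hG : rename (identifyVars i j t) G = 0) :
    rename (identifyVars i j t) (pderiv (Sum.inr m) G) = 0 := by
  rw [← pderiv_rename_of_fiber_eq (identifyVars_eq_inr_iff hj ht), hG, map_zero]

theorem pderiv_rename_collapseRight (y₀ : κ) (G : MvPolynomial (ι ⊕ κ) R) :
    pderiv (Sum.inr y₀) (rename (collapseRight y₀) G) =
      ∑ m, rename (collapseRight y₀) (pderiv (Sum.inr m) G) := by
  rw [pderiv_rename_eq_sum, sum_filter, Fintype.sum_sum_type]
  simp

theorem rename_update_iterate_pderiv_rename_collapseRight_eq_zero (i : ι) (y₀ : κ) (s : ℕ)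
    (A : Finset κ) (hA : s + 2 ≤ #A) (G : MvPolynomial (ι ⊕ κ) R)
    (hG : ∀ j ∈ A, ∀ t ∈ A, j ≠ t → rename (identifyVars i j t) G = 0) :
    rename (update id (Sum.inl i) (Sum.inr y₀))
      ((⇑(pderiv (Sum.inr y₀)))^[s] (rename (collapseRight y₀) G)) = 0 := by
  induction s generalizing A G with
  | zero =>
    obtain ⟨j, hj, t, ht, hjt⟩ := one_lt_card.mp (by omega : 1 < #A)
    rw [iterate_zero_apply, rename_rename, update_comp_collapseRight_eq_collapseRight_comp_identifyVars i j t,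
      ← rename_rename, hG j hj t ht hjt, map_zero]
  | succ s ih =>
    rw [iterate_succ_apply, pderiv_rename_collapseRight, iterate_map_sum, map_sum]
    refine sum_eq_zero fun m _ => ih (A.erase m) (by grind [pred_card_le_card_erase]) _ fun j hj t ht hjt => ?_
    exact rename_identifyVars_pderiv_eq_zero (ne_of_mem_erase hj).symm
      (ne_of_mem_erase ht).symm (hG j (mem_of_mem_erase hj) t
        (mem_of_mem_erase ht) hjt)

end Collapse

theorem stmt17_general (α β : ℕ) (hβ : 1 ≤ β) (F : MvPolynomial (Fin α ⊕ Fin β) ℚ)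
    (hvan : ∀ (i : Fin α) (j t : Fin β), j ≠ t →
      aeval (fun v : Fin α ⊕ Fin β =>
        if v = Sum.inl i ∨ v = Sum.inr t
        then (X (Sum.inr j) : MvPolynomial (Fin α ⊕ Fin β) ℚ)
        else X v) F = 0) :
    (∀ (i : Fin α) (s : ℕ), s + 2 ≤ β →
      aeval (fun v : Fin α ⊕ Fin β =>
        if v = Sum.inl i
        then (X (Sum.inr (⟨0, hβ⟩ : Fin β)) : MvPolynomial (Fin α ⊕ Fin β) ℚ)
        else X v)
        ((⇑(pderiv (Sum.inr (⟨0, hβ⟩ : Fin β))))^[s]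
          (aeval (Sum.elim
              (fun i' : Fin α => (X (Sum.inl i') : MvPolynomial (Fin α ⊕ Fin β) ℚ))
              (fun _ : Fin β => (X (Sum.inr (⟨0, hβ⟩ : Fin β)) : MvPolynomial (Fin α ⊕ Fin β) ℚ)))
            F)) = 0) ∧
    (∏ i : Fin α,
        ((X (Sum.inl i) : MvPolynomial (Fin α ⊕ Fin β) ℚ) -
          X (Sum.inr (⟨0, hβ⟩ : Fin β))) ^ (β - 1)) ∣
      aeval (Sum.elim
          (fun i' : Fin α => (X (Sum.inl i') : MvPolynomial (Fin α ⊕ Fin β) ℚ))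
          (fun _ : Fin β => (X (Sum.inr (⟨0, hβ⟩ : Fin β)) : MvPolynomial (Fin α ⊕ Fin β) ℚ)))
        F := by
  set y₀ : Fin β := ⟨0, hβ⟩
  have hf : aeval (Sum.elim (fun i' : Fin α => (X (Sum.inl i') : MvPolynomial (Fin α ⊕ Fin β) ℚ))
      fun _ => X (Sum.inr y₀)) F = rename (collapseRight y₀) F :=
    aeval_eq_rename (fun v => by cases v <;> rfl) F
  have hvan' (i : Fin α) (j t : Fin β) (hjt : j ≠ t) : rename (identifyVars i j t) F = 0 := by
    rw [← hvan i j t hjt, aeval_eq_rename (g := identifyVars i j t) fun v => by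
      simp [identifyVars, apply_ite X]]
  have hvanish (i : Fin α) (s : ℕ) (hs : s + 2 ≤ β) :
      rename (update id (Sum.inl i) (Sum.inr y₀))
        ((⇑(pderiv (Sum.inr y₀)))^[s] (rename (collapseRight y₀) F)) = 0 :=
    rename_update_iterate_pderiv_rename_collapseRight_eq_zero i y₀ s univ (by simpa using hs) F
      fun j _ t _ => hvan' i j t
  refine ⟨fun i s hs => ?_, ?_⟩
  · convert hvanish i s hs using 1
    rw [hf, aeval_eq_rename (g := update id (Sum.inl i) (Sum.inr y₀)) fun v => by
      simp [update_apply, apply_ite X]]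
  · rw [hf]
    refine Fintype.prod_dvd_of_isRelPrime (fun i i' hii' => ?_) fun i =>
      X_sub_X_pow_dvd_of_rename_update_iterate_pderiv_eq_zero (by simp) fun s hs =>
        hvanish i s (by omega)
    exact (isRelPrime_X_sub_X (by simpa using hii') (by simp) (by simp)).pow

/-- let `F(x_1,…,x_α; y_1,…,y_β)` be a polynomial over `ℚ`, symmetric
in the `y` variables, vanishing on every subvariety `x_i = y_j = y_t` (`j ≠ t`), and
let `f(x; y) := F(x_1,…,x_α; y,…,y)` (all `y` variables set equal to `y := y_1`).
Then for each `i` and each `s = 0,1,…,β−2`, `(∂/∂y)^s f` vanishes on `x_i = y`;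
consequently `f` is divisible by `∏_{i=1}^α (x_i − y)^{β−1}`. -/
theorem stmt17 (α β : ℕ) (hβ : 1 ≤ β) (F : MvPolynomial (Fin α ⊕ Fin β) ℚ)
    (hsym : ∀ σ : Equiv.Perm (Fin β), rename (Sum.map id σ) F = F)
    (hvan : ∀ (i : Fin α) (j t : Fin β), j ≠ t →
      aeval (fun v : Fin α ⊕ Fin β =>
        if v = Sum.inl i ∨ v = Sum.inr t
        then (X (Sum.inr j) : MvPolynomial (Fin α ⊕ Fin β) ℚ)
        else X v) F = 0) :
    (∀ (i : Fin α) (s : ℕ), s + 2 ≤ β →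
      aeval (fun v : Fin α ⊕ Fin β =>
        if v = Sum.inl i
        then (X (Sum.inr (⟨0, hβ⟩ : Fin β)) : MvPolynomial (Fin α ⊕ Fin β) ℚ)
        else X v)
        ((⇑(pderiv (Sum.inr (⟨0, hβ⟩ : Fin β))))^[s]
          (aeval (Sum.elim
              (fun i' : Fin α => (X (Sum.inl i') : MvPolynomial (Fin α ⊕ Fin β) ℚ))
              (fun _ : Fin β => (X (Sum.inr (⟨0, hβ⟩ : Fin β)) : MvPolynomial (Fin α ⊕ Fin β) ℚ)))
            F)) = 0) ∧
    (∏ i : Fin α,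
        ((X (Sum.inl i) : MvPolynomial (Fin α ⊕ Fin β) ℚ) -
          X (Sum.inr (⟨0, hβ⟩ : Fin β))) ^ (β - 1)) ∣
      aeval (Sum.elim
          (fun i' : Fin α => (X (Sum.inl i') : MvPolynomial (Fin α ⊕ Fin β) ℚ))
          (fun _ : Fin β => (X (Sum.inr (⟨0, hβ⟩ : Fin β)) : MvPolynomial (Fin α ⊕ Fin β) ℚ)))
        F :=
  stmt17_general α β hβ F hvan
end

section
/- Suppose l_1 + c ≥ k and fix I = {u_1 < ⋯ < u_a}. With J_min = {min(u_i, k−b+i)}_{1≤i≤a} ⊔ [k−c+1, k] where b = a+c, one has σ'(I, J_min) = (κ[k−b+1, k−c] − κ(I))⁺, where σ'(I,J) = κ(J) − κ(I) − κ[k−c+1, k]. -/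
/-- `J_min = {min(u_i, k−b+i)}_{1≤i≤a} ⊔ [k−c+1, k]`, where `b = a + c`. -/
def Jmin (k a c : ℕ) (u : Fin a → ℕ) : Finset ℕ :=
  (Finset.image (fun i : Fin a => min (u i) (k - (a + c) + ((i : ℕ) + 1))) Finset.univ) ∪
    Finset.Icc (k - c + 1) k

lemma lower_total {n : ℕ} (S T : Finset (Fin n))
    (hS : ∀ i j : Fin n, i ≤ j → j ∈ S → i ∈ S)
    (hT : ∀ i j : Fin n, i ≤ j → j ∈ T → i ∈ T) :
    (S ∪ T).card = max S.card T.card := by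
  have h : S ⊆ T ∨ T ⊆ S := by
    by_contra hc
    obtain ⟨h1, h2⟩ := not_or.mp hc
    obtain ⟨s, hs, hsT⟩ := Finset.not_subset.mp h1
    obtain ⟨t, ht, htS⟩ := Finset.not_subset.mp h2
    rcases le_total s t with h | h
    · exact hsT (hT s t h ht)
    · exact htS (hS t s h hs)
  rcases h with h | h
  · rw [Finset.union_eq_right.mpr h, max_eq_right (Finset.card_le_card h)]
  · rw [Finset.union_eq_left.mpr h, max_eq_left (Finset.card_le_card h)]

lemma card_filter_lt {n m : ℕ} :
    (Finset.univ.filter (fun i : Fin n => (i : ℕ) < m)).card = min m n := by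
  have h := Finset.filter_map (f := Fin.valEmbedding) (s := (Finset.univ : Finset (Fin n)))
    (p := fun x => x < m)
  rw [Fin.map_valEmbedding_univ] at h
  have h2 : (Finset.Iio n).filter (fun x => x < m) = Finset.Iio (min m n) := by
    ext x; simp only [Finset.mem_Iio, Finset.mem_filter]; omega
  calc (Finset.univ.filter (fun i : Fin n => (i : ℕ) < m)).card
      = ((Finset.univ.filter (fun i : Fin n => (i : ℕ) < m)).map Fin.valEmbedding).card :=
        (Finset.card_map _).symm
    _ = min m n := by
        simp only [Function.comp_def, Fin.valEmbedding_apply] at h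
        rw [← h, h2, Nat.card_Iio]

/-- suppose `l₁ + c ≥ k` and fix `I = {u_1 < ⋯ < u_a}`.  With
`J_min = {min(u_i, k−b+i)} ⊔ [k−c+1,k]` (`b = a+c`), one has
`σ'(I, J_min) = (κ[k−b+1, k−c] − κ(I))⁺`, where
`σ'(I,J) = κ(J) − κ(I) − κ[k−c+1, k]`. -/
theorem stmt18 (k a c l1 : ℕ) (hl1 : l1 ≤ k) (hlc : k ≤ l1 + c) (hbk : a + c ≤ k)
    (u : Fin a → ℕ) (hu : StrictMono u) (hur : ∀ i, u i ∈ Finset.Icc 1 k) :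
    ∀ α ∈ Finset.Icc 1 k,
      kappa (Jmin k a c u) α - kappa (Finset.image u Finset.univ) α
          - kappa (Finset.Icc (k - c + 1) k) α
        = max (kappa (Finset.Icc (k - (a + c) + 1) (k - c)) α -
            kappa (Finset.image u Finset.univ) α) 0 := by
  intro α hα
  simp only [Finset.mem_Icc] at hα
  set b := a + c with hb
  set v : Fin a → ℕ := fun i => min (u i) (k - b + ((i : ℕ) + 1)) with hv
  have hvmono : StrictMono v := by
    intro i j hij
    exact lt_min (lt_of_le_of_lt (min_le_left _ _) (hu hij))
      (lt_of_le_of_lt (min_le_right _ _) (by simp; omega))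
  set A := (Finset.univ.filter (fun i : Fin a => u i ≤ α)).card with hA
  set t := (Finset.univ.filter (fun i : Fin a => k - b + ((i : ℕ) + 1) ≤ α)).card with ht
  -- kappa of image of injective function
  have himg : ∀ (f : Fin a → ℕ), Function.Injective f →
      kappa (Finset.image f Finset.univ) α
        = ((Finset.univ.filter (fun i => f i ≤ α)).card : ℤ) := by
    intro f hf
    unfold kappa
    rw [Finset.filter_image, Finset.card_image_of_injective _ hf]
  have hAeq : kappa (Finset.image u Finset.univ) α = (A : ℤ) :=
    himg u hu.injective
  -- kappa of Jmin
  have hVfilter : (Finset.univ.filter (fun i : Fin a => v i ≤ α))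
      = (Finset.univ.filter (fun i : Fin a => u i ≤ α))
        ∪ (Finset.univ.filter (fun i : Fin a => k - b + ((i : ℕ) + 1) ≤ α)) := by
    ext i
    simp [hv, min_le_iff]
  have hVcard : (Finset.univ.filter (fun i : Fin a => v i ≤ α)).card = max A t := by
    rw [hVfilter]
    apply lower_total
    · intro i j hij hj
      simp only [Finset.mem_filter, Finset.mem_univ, true_and] at *
      exact le_trans (hu.monotone hij) hj
    · intro i j hij hj
      simp only [Finset.mem_filter, Finset.mem_univ, true_and] at *
      omega
  have hJ : kappa (Jmin k a c u) α
      = (max A t : ℤ) + kappa (Finset.Icc (k - c + 1) k) α := by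
    unfold kappa Jmin
    rw [Finset.filter_union, Finset.card_union_of_disjoint]
    · push_cast
      congr 1
      rw [Finset.filter_image, Finset.card_image_of_injective _ hvmono.injective]
      exact_mod_cast congrArg Nat.cast hVcard
    · rw [Finset.disjoint_left]
      intro x hx hx2
      simp only [Finset.mem_filter, Finset.mem_image, Finset.mem_univ, true_and,
        Finset.mem_Icc] at hx hx2
      obtain ⟨⟨i, rfl⟩, _⟩ := hx
      have hi : (i : ℕ) + 1 ≤ a := i.2
      have : min (u i) (k - b + ((i : ℕ) + 1)) ≤ k - c := by
        have := min_le_right (u i) (k - b + ((i : ℕ) + 1))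
        omega
      omega
  -- t as min
  have htval : t = min (α - (k - b)) a := by
    rw [ht]
    have : (Finset.univ.filter (fun i : Fin a => k - b + ((i : ℕ) + 1) ≤ α))
        = Finset.univ.filter (fun i : Fin a => (i : ℕ) < α - (k - b)) := by
      ext i; simp; omega
    rw [this, card_filter_lt]
  -- the Icc kappa
  have hIcc : kappa (Finset.Icc (k - b + 1) (k - c)) α = (t : ℤ) := by
    unfold kappa
    have : (Finset.Icc (k - b + 1) (k - c)).filter (fun i => i ≤ α)
        = Finset.Icc (k - b + 1) (min (k - c) α) := by
      ext x; simp [Finset.mem_Icc]; omega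
    rw [this, Nat.card_Icc]
    have hck : c ≤ k := by omega
    have hab : a ≤ b := by omega
    congr 1
    omega
  rw [hJ, hAeq, hIcc]
  rcases le_total (A : ℤ) (t : ℤ) with h | h
  · rw [sup_eq_right.mpr h, sup_eq_left.mpr (by omega : (0:ℤ) ≤ (t:ℤ) - (A:ℤ))]
    ring
  · rw [sup_eq_left.mpr h, sup_eq_right.mpr (by omega : (t:ℤ) - (A:ℤ) ≤ 0)]
    ring
end

section
/- Fix k, and let ρ = ρ(I,J) ∈ ℤ^k be the vector associated to an (l_1,l_2)-admissible pair (I,J), with J_up = J ∩ [1, l_1]. Then for 1 ≤ α ≤ k−1: (P1) ρ_α − 2 ≤ ρ_{α+1} ≤ ρ_α + 1; (P2) if α+1 ∈ J_up then ρ_{α+1} ≥ ρ_α; (P3) if α+1 ∉ J_up then ρ_{α+1} ≤ ρ_α. -/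
/-! The increment `ρ_{α+1} − ρ_α` equals `A − B − C`, where `A`, `B`, `C` count how often the
value `α+1` occurs among `v_1, …, v_p`, among `u_1, …, u_a` and among `v'_{a+1}, …, v'_p`.
Each count is `0` or `1`: the `u_i`, `v_i` are strictly increasing, and the `v'_i` are distinct
entries of a sorted list, apart from the padding value `k+1 > α+1`. Since `v` is increasing,
`v_1, …, v_p` are exactly the `v_i ≤ l₁`, so `A = 1` iff `α+1 ∈ J_up`; in that case `C = 0`,
because every `v'_i` exceeds `l₁`. -/

open Finset

namespace List

variable {α : Type*} {l : List α} {d : α}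

lemma lt_length_of_getD_ne {n : ℕ} (h : l.getD n d ≠ d) : n < l.length := by
  by_contra hn
  exact h (getD_eq_default _ _ (not_lt.mp hn))

lemma mem_of_getD_eq_of_ne {n : ℕ} {c : α} (hc : c ≠ d) (h : l.getD n d = c) : c ∈ l := by
  have hn := lt_length_of_getD_ne (h ▸ hc)
  rw [← h, getD_eq_getElem _ _ hn]
  exact getElem_mem hn

lemma Nodup.eq_of_getD_eq_of_ne (hl : l.Nodup) {m n : ℕ} {c : α} (hc : c ≠ d)
    (hm : l.getD m d = c) (hn : l.getD n d = c) : m = n := by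
  have hm' := lt_length_of_getD_ne (hm ▸ hc)
  have hn' := lt_length_of_getD_ne (hn ▸ hc)
  rw [getD_eq_getElem _ _ hm'] at hm
  rw [getD_eq_getElem _ _ hn'] at hn
  exact hl.getElem_inj_iff.mp (hm.trans hn.symm)

end List

namespace Finset

variable {ι : Type*}

lemma card_filter_eq_le_one {β : Type*} [DecidableEq β] {s : Finset ι} {f : ι → β} {c : β}
    (h : ∀ i ∈ s, ∀ j ∈ s, f i = c → f j = c → i = j) : #{i ∈ s | f i = c} ≤ 1 :=
  card_le_one.mpr fun i hi j hj =>
    h i (mem_filter.mp hi).1 j (mem_filter.mp hj).1 (mem_filter.mp hi).2 (mem_filter.mp hj).2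

lemma sum_boole_le_succ_sub_sum_boole_le (s : Finset ι) (f : ι → ℕ) (α : ℕ) :
    ∑ i ∈ s, (if f i ≤ α + 1 then (1 : ℤ) else 0) - ∑ i ∈ s, (if f i ≤ α then (1 : ℤ) else 0) =
      #{i ∈ s | f i = α + 1} := by
  rw [← sum_sub_distrib, natCast_card_filter]
  exact sum_congr rfl fun i _ => by split_ifs <;> omega

end Finset

lemma Monotone.lt_card_filter_le_iff {β : Type*} [Preorder β] [DecidableLE β] {n : ℕ}
    {v : Fin n → β} (hv : Monotone v) (c : β) (j : Fin n) :
    (j : ℕ) < #{i | v i ≤ c} ↔ v j ≤ c := by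
  constructor
  · intro hj
    by_contra hjc
    have hsub : ({i | v i ≤ c} : Finset (Fin n)) ⊆ Iio j := fun i hi => by
      simp only [mem_filter, mem_univ, true_and] at hi
      exact mem_Iio.mpr (lt_of_not_ge fun hji => hjc ((hv hji).trans hi))
    have := card_le_card hsub
    rw [Fin.card_Iio] at this
    omega
  · intro hjc
    have hsub : Iic j ⊆ ({i | v i ≤ c} : Finset (Fin n)) := fun i hi =>
      mem_filter.mpr ⟨mem_univ _, (hv (mem_Iic.mp hi)).trans hjc⟩
    have := card_le_card hsub
    rw [Fin.card_Iic] at this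
    omega

theorem stmt19_general (k l1 a b : ℕ)
    (u : Fin a → ℕ) (v : Fin b → ℕ) (hu : StrictMono u) (hv : StrictMono v)
    (p : ℕ) (hp : p = (Finset.univ.filter (fun i : Fin b => v i ≤ l1)).card)
    (hpb : p ≤ b)
    (rho : ℕ → ℤ)
    (hrho : ∀ α, rho α =
      (∑ i : Fin p, if v (Fin.castLE hpb i) ≤ α then (1 : ℤ) else 0)
      - (∑ i : Fin a, if u i ≤ α then (1 : ℤ) else 0)
      - (∑ i : Fin p, if a ≤ (i : ℕ) then
          (if ((Finset.Icc (l1 + 1) k \ Finset.image v Finset.univ).sort (· ≤ ·)).getD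
                (p - ((i : ℕ) + 1)) (k + 1) ≤ α then (1 : ℤ) else 0)
          else 0)) :
    ∀ α : ℕ, 1 ≤ α → α + 1 ≤ k →
      (rho α - 2 ≤ rho (α + 1) ∧ rho (α + 1) ≤ rho α + 1) ∧
      ((α + 1 ∈ Finset.image v Finset.univ ∧ α + 1 ≤ l1) → rho α ≤ rho (α + 1)) ∧
      (¬(α + 1 ∈ Finset.image v Finset.univ ∧ α + 1 ≤ l1) → rho (α + 1) ≤ rho α) := by
  intro α _ hαk
  set L := (Finset.Icc (l1 + 1) k \ Finset.image v Finset.univ).sort (· ≤ ·)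
  set w : Fin p → ℕ := fun i => L.getD (p - ((i : ℕ) + 1)) (k + 1)
  have hstep : rho (α + 1) - rho α = #{i | v (Fin.castLE hpb i) = α + 1} - #{i | u i = α + 1}
      - #{i ∈ univ.filter (a ≤ ·.val) | w i = α + 1} := by
    simp only [hrho, ← Finset.sum_filter, ← sum_boole_le_succ_sub_sum_boole_le]
    ring
  set A := #{i | v (Fin.castLE hpb i) = α + 1}
  set C := #{i ∈ univ.filter (a ≤ ·.val) | w i = α + 1}
  have hA : A ≤ 1 := card_filter_eq_le_one
    fun i _ j _ hi hj => Fin.castLE_injective hpb (hv.injective (hi.trans hj.symm))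
  have hB : #{i | u i = α + 1} ≤ 1 := card_filter_eq_le_one
    fun i _ j _ hi hj => hu.injective (hi.trans hj.symm)
  have hC : C ≤ 1 := card_filter_eq_le_one fun i _ j _ hi hj => Fin.ext <| by
    have := (sort_nodup _ _).eq_of_getD_eq_of_ne (by omega) hi hj
    omega
  have hJ : ∀ j : Fin b, (j : ℕ) < p ↔ v j ≤ l1 := hp ▸ hv.monotone.lt_card_filter_le_iff l1
  refine ⟨by omega, fun ⟨hmem, hle⟩ => ?_, fun hnot => ?_⟩
  · obtain ⟨j, -, hj⟩ := mem_image.mp hmem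
    have hA1 : 0 < A :=
      card_pos.mpr ⟨⟨j, (hJ j).mpr (hj ▸ hle)⟩, mem_filter.mpr ⟨mem_univ _, hj⟩⟩
    have hC0 : C = 0 := card_eq_zero.mpr <| filter_eq_empty_iff.mpr fun i _ hi => by
      have := List.mem_of_getD_eq_of_ne (by omega) hi
      simp only [L, mem_sort, mem_sdiff, mem_Icc] at this
      omega
    omega
  · have hA0 : A = 0 := card_eq_zero.mpr <| filter_eq_empty_iff.mpr fun i _ hi =>
      hnot ⟨mem_image.mpr ⟨_, mem_univ _, hi⟩, hi ▸ (hJ _).mp i.2⟩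
    omega

/-- properties (P1)–(P3) of the vector `ρ = ρ(I,J)` attached to an
`(l₁,l₂)`-admissible pair `(I,J)`: writing
`ρ = Σ_{i=1}^p κ(v_i) − Σ_{i=1}^a κ(u_i) − Σ_{i=a+1}^p κ(v'_i)` and
`J_up = J ∩ [1,l₁]`, for `1 ≤ α ≤ k−1` one has
(P1) `ρ_α − 2 ≤ ρ_{α+1} ≤ ρ_α + 1`;
(P2) if `α+1 ∈ J_up` then `ρ_{α+1} ≥ ρ_α`;
(P3) if `α+1 ∉ J_up` then `ρ_{α+1} ≤ ρ_α`. -/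
theorem stmt19 (k l1 l2 a b : ℕ) (hl1 : l1 ≤ k) (hl2 : l2 ≤ k)
    (u : Fin a → ℕ) (v : Fin b → ℕ) (hu : StrictMono u) (hv : StrictMono v)
    (hur : ∀ i, u i ∈ Finset.Icc 1 k) (hvr : ∀ i, v i ∈ Finset.Icc 1 k)
    (p : ℕ) (hp : p = (Finset.univ.filter (fun i : Fin b => v i ≤ l1)).card)
    (hap : a ≤ p) (hpb : p ≤ b) (hbl2 : b ≤ l2)
    (hadm : ∀ i : Fin a, v (Fin.castLE (hap.trans hpb) i) ≤ u i ∧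
      u i < ((Finset.Icc (l1 + 1) k \ Finset.image v Finset.univ).sort (· ≤ ·)).getD
        (p - ((i : ℕ) + 1)) (k + 1))
    (rho : ℕ → ℤ)
    (hrho : ∀ α, rho α =
      (∑ i : Fin p, if v (Fin.castLE hpb i) ≤ α then (1 : ℤ) else 0)
      - (∑ i : Fin a, if u i ≤ α then (1 : ℤ) else 0)
      - (∑ i : Fin p, if a ≤ (i : ℕ) then
          (if ((Finset.Icc (l1 + 1) k \ Finset.image v Finset.univ).sort (· ≤ ·)).getD
                (p - ((i : ℕ) + 1)) (k + 1) ≤ α then (1 : ℤ) else 0)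
          else 0)) :
    ∀ α : ℕ, 1 ≤ α → α + 1 ≤ k →
      (rho α - 2 ≤ rho (α + 1) ∧ rho (α + 1) ≤ rho α + 1) ∧
      ((α + 1 ∈ Finset.image v Finset.univ ∧ α + 1 ≤ l1) → rho α ≤ rho (α + 1)) ∧
      (¬(α + 1 ∈ Finset.image v Finset.univ ∧ α + 1 ≤ l1) → rho (α + 1) ≤ rho α) :=
  stmt19_general k l1 a b u v hu hv p hp hpb rho hrho
end
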